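/- arXiv:1802.00572 — 7 statements merged into one kernel-verified Lean document; each statement's English description precedes it below -/
import Mathlib

section
/- For 0 < p < ∞ there exist constants c, C > 0 depending only on p such that c·n^{-1/p} ≤ vol(B_p^n)^{1/n} ≤ C·n^{-1/p} for all n ≥ 1, where B_p^n is the unit ball of ℓ_p^n(ℝ). -/
/-!
The cube `[-n^(-1/p), n^(-1/p)]^n` lies in `B_p^n`, which gives the lower bound. For the upper
bound, `∫ exp (-∑ |x i|^p) = (2 Γ(1/p + 1))^n` factorizes over the coordinates, and Markov's
inequality on the sublevel set `r • B_p^n = {∑ |x i|^p ≤ r^p}` gives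
`exp (-r^p) r^n vol(B_p^n) ≤ (2 Γ(1/p + 1))^n`; the choice `r^p = n/p` yields the rate `n^(-1/p)`.
-/
open MeasureTheory Real Set
open scoped Pointwise

def lpUnitBall (ι : Type*) [Fintype ι] (p : ℝ) : Set (ι → ℝ) := {x | ∑ i, |x i| ^ p ≤ 1}

variable {ι : Type*} [Fintype ι] {p : ℝ}

theorem integral_exp_neg_sum_abs_rpow (hp : 0 < p) :
    ∫ x : ι → ℝ, exp (-∑ i, |x i| ^ p) = (2 * Gamma (1 / p + 1)) ^ Fintype.card ι := by
  simp_rw [← Finset.sum_neg_distrib, exp_sum]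
  rw [integral_fintype_prod_volume_eq_pow fun t : ℝ => exp (-|t| ^ p),
    integral_comp_abs (f := fun t => exp (-t ^ p)), integral_exp_neg_rpow hp]

theorem integrable_exp_neg_sum_abs_rpow (hp : 0 < p) :
    Integrable fun x : ι → ℝ => exp (-∑ i, |x i| ^ p) := by
  refine Integrable.of_integral_ne_zero ?_
  rw [integral_exp_neg_sum_abs_rpow hp]
  have := Gamma_pos_of_pos (by positivity : 0 < 1 / p + 1)
  positivity

theorem smul_lpUnitBall {r : ℝ} (hr : 0 < r) :
    r • lpUnitBall ι p = {x | ∑ i, |x i| ^ p ≤ r ^ p} := by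
  ext x
  have hrp : 0 < r ^ p := rpow_pos_of_pos hr p
  have hsum : ∑ i, |r⁻¹ * x i| ^ p = (r ^ p)⁻¹ * ∑ i, |x i| ^ p := by
    rw [Finset.mul_sum]
    refine Finset.sum_congr rfl fun i _ => ?_
    rw [abs_mul, abs_inv, abs_of_pos hr, mul_rpow (inv_nonneg.2 hr.le) (abs_nonneg _),
      inv_rpow hr.le]
  rw [mem_smul_set_iff_inv_smul_mem₀ hr.ne']
  simp only [lpUnitBall, mem_ofPred_eq, Pi.smul_apply, smul_eq_mul]
  rw [hsum, inv_mul_le_iff₀ hrp, mul_one]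

theorem ofReal_mul_volume_lpUnitBall_le (hp : 0 < p) {r : ℝ} (hr : 0 < r) :
    ENNReal.ofReal (exp (-r ^ p) * r ^ Fintype.card ι) * volume (lpUnitBall ι p) ≤
      ENNReal.ofReal ((2 * Gamma (1 / p + 1)) ^ Fintype.card ι) := by
  set f : (ι → ℝ) → ℝ := fun x => exp (-∑ i, |x i| ^ p)
  have hlevel : {x | ENNReal.ofReal (exp (-r ^ p)) ≤ ENNReal.ofReal (f x)} =
      r • lpUnitBall ι p := by
    ext x
    simp [smul_lpUnitBall hr, f, ENNReal.ofReal_le_ofReal_iff (exp_pos _).le]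
  have markov := mul_meas_ge_le_lintegral₀ (μ := volume)
    (f := fun x => ENNReal.ofReal (f x)) (by fun_prop) (ENNReal.ofReal (exp (-r ^ p)))
  rwa [hlevel, ← ofReal_integral_eq_lintegral_ofReal (integrable_exp_neg_sum_abs_rpow hp)
      (Filter.Eventually.of_forall fun x => (exp_pos _).le),
    integral_exp_neg_sum_abs_rpow hp, Measure.addHaar_smul_of_nonneg _ hr.le,
    Module.finrank_fintype_fun_eq_card, ← mul_assoc,
    ← ENNReal.ofReal_mul (exp_pos _).le] at markov

theorem volume_lpUnitBall_le [Nonempty ι] (hp : 0 < p) :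
    volume (lpUnitBall ι p) ≤ ENNReal.ofReal
      ((2 * Gamma (1 / p + 1) * (exp 1 * p) ^ (1 / p) * (Fintype.card ι : ℝ) ^ (-(1 / p))) ^
        Fintype.card ι) := by
  set n := Fintype.card ι
  have hn : (0 : ℝ) < n := Nat.cast_pos.2 Fintype.card_pos
  set r : ℝ := (n / p) ^ (1 / p)
  have hr : 0 < r := by positivity
  have hrp : r ^ p = n / p := by
    rw [← rpow_mul (by positivity), one_div_mul_cancel hp.ne', rpow_one]
  have hc : 0 < exp (-r ^ p) * r ^ n := by positivity
  have hconst : (2 * Gamma (1 / p + 1) * (exp 1 * p) ^ (1 / p) * (n : ℝ) ^ (-(1 / p))) ^ n =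
      (2 * Gamma (1 / p + 1)) ^ n / (exp (-r ^ p) * r ^ n) := by
    have hK : (exp 1 * p) ^ (1 / p) * (n : ℝ) ^ (-(1 / p)) = exp (1 / p) / r := by
      rw [eq_div_iff hr.ne', mul_right_comm, ← mul_rpow (by positivity) (by positivity),
        mul_assoc, mul_div_cancel₀ _ hp.ne', mul_rpow (exp_pos 1).le hn.le, mul_assoc,
        ← rpow_add hn, add_neg_cancel, rpow_zero, mul_one, exp_one_rpow]
    rw [mul_assoc, hK, hrp, exp_neg, mul_pow, div_pow, ← exp_nat_mul]
    field_simp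
  rw [hconst, ENNReal.ofReal_div_of_pos hc, ENNReal.le_div_iff_mul_le (by simp [hc]) (by simp),
    mul_comm]
  exact ofReal_mul_volume_lpUnitBall_le hp hr

theorem ofReal_le_volume_lpUnitBall (hp : 0 < p) :
    ENNReal.ofReal ((2 * (Fintype.card ι : ℝ) ^ (-(1 / p))) ^ Fintype.card ι) ≤
      volume (lpUnitBall ι p) := by
  set n := Fintype.card ι
  set a : ℝ := (n : ℝ) ^ (-(1 / p))
  have ha : 0 ≤ a := rpow_nonneg n.cast_nonneg _
  have hap : a ^ p = (n : ℝ)⁻¹ := by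
    rw [← rpow_mul n.cast_nonneg, neg_mul, one_div_mul_cancel hp.ne', rpow_neg_one]
  have hcube : univ.pi (fun _ : ι => Icc (-a) a) ⊆ lpUnitBall ι p := by
    intro x hx
    calc ∑ i, |x i| ^ p ≤ ∑ _i : ι, a ^ p := Finset.sum_le_sum fun i _ =>
          rpow_le_rpow (abs_nonneg _) (abs_le.2 (hx i (mem_univ i))) hp.le
      _ = n * (n : ℝ)⁻¹ := by rw [Finset.sum_const, nsmul_eq_mul, hap]; rfl
      _ ≤ 1 := mul_inv_le_one
  calc ENNReal.ofReal ((2 * a) ^ n) = volume (univ.pi (fun _ : ι => Icc (-a) a)) := by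
        rw [volume_pi_pi, Finset.prod_const, Real.volume_Icc, Finset.card_univ,
          ← ENNReal.ofReal_pow (by linarith), sub_neg_eq_add, two_mul]
    _ ≤ volume (lpUnitBall ι p) := measure_mono hcube

namespace ENNReal

theorem le_toReal_rpow_inv_of_ofReal_pow_le {V : ℝ≥0∞} {a : ℝ} {n : ℕ} (hn : n ≠ 0)
    (ha : 0 ≤ a) (hV : V ≠ ⊤) (h : ENNReal.ofReal (a ^ n) ≤ V) :
    a ≤ V.toReal ^ (n : ℝ)⁻¹ := by
  rw [le_rpow_inv_iff_of_pos ha toReal_nonneg (by positivity), Real.rpow_natCast]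
  exact (ofReal_le_iff_le_toReal hV).1 h

theorem toReal_rpow_inv_le_of_le_ofReal_pow {V : ℝ≥0∞} {b : ℝ} {n : ℕ} (hn : n ≠ 0)
    (hb : 0 ≤ b) (h : V ≤ ENNReal.ofReal (b ^ n)) :
    V.toReal ^ (n : ℝ)⁻¹ ≤ b := by
  rw [rpow_inv_le_iff_of_pos toReal_nonneg hb (by positivity), Real.rpow_natCast]
  exact toReal_le_of_le_ofReal (by positivity) h

end ENNReal

theorem volume_lp_ball_asymp (p : ℝ) (hp : 0 < p) :
    ∃ c C : ℝ, 0 < c ∧ 0 < C ∧ ∀ n : ℕ, 1 ≤ n →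
      c * (n : ℝ) ^ (-(1 / p)) ≤
        (volume {x : Fin n → ℝ | ∑ i, |x i| ^ p ≤ 1}).toReal ^ ((n : ℝ)⁻¹) ∧
      (volume {x : Fin n → ℝ | ∑ i, |x i| ^ p ≤ 1}).toReal ^ ((n : ℝ)⁻¹) ≤
        C * (n : ℝ) ^ (-(1 / p)) := by
  have hΓ := Gamma_pos_of_pos (by positivity : 0 < 1 / p + 1)
  refine ⟨2, 2 * Gamma (1 / p + 1) * (exp 1 * p) ^ (1 / p), two_pos, by positivity,
    fun n hn => ?_⟩
  have : Nonempty (Fin n) := ⟨⟨0, hn⟩⟩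
  have hn0 : n ≠ 0 := by omega
  have hlower := ofReal_le_volume_lpUnitBall (ι := Fin n) hp
  have hupper := volume_lpUnitBall_le (ι := Fin n) hp
  rw [Fintype.card_fin] at hlower hupper
  exact ⟨ENNReal.le_toReal_rpow_inv_of_ofReal_pow_le hn0 (by positivity)
      (ne_top_of_le_ne_top ENNReal.ofReal_ne_top hupper) hlower,
    ENNReal.toReal_rpow_inv_le_of_le_ofReal_pow hn0 (by positivity) hupper⟩
end

section
/- Let 0 < p ≤ 1, n ∈ ℕ, and let X be a real n-dimensional p-Banach space. Then for all k ∈ ℕ, e_k(id : X → X) ≤ 4^{1/p} · 2^{-(k-1)/n}. -/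
/-!
A maximal `ε`-separated subset `T` of the unit ball `B` is an `ε`-net of `B`.
With `τ = ε / 2^(1/p)`, the `p`-triangle inequality makes the balls `a + τB`, `a ∈ T`, pairwise
disjoint and contained in `2^(1/p) B`; comparing Haar measures gives
`#T ≤ (2^(1/p) / τ)^n = (4^(1/p) / ε)^n`, which is `2^(k-1)` for `ε = 4^(1/p) 2^(-(k-1)/n)`.
-/

/-- The `k`-th dyadic entropy number of the identity on `X`, whose unit ball is given by the
norm function `N`: the infimum of `r > 0` such that the unit ball can be covered by
`2^(k-1)` translates of `r` times the unit ball. -/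
noncomputable def entropyNumberId {X : Type*} [AddCommGroup X] [Module ℝ X]
    (N : X → ℝ) (k : ℕ) : ℝ :=
  sInf {r : ℝ | 0 < r ∧ ∃ S : Finset X, S.card ≤ 2 ^ (k - 1) ∧
    ∀ x : X, N x ≤ 1 → ∃ y ∈ S, N (x - y) ≤ r}

open MeasureTheory Pointwise Set Filter Topology Module

structure IsPNorm {E : Type*} [AddCommGroup E] [Module ℝ E] (p : ℝ) (N : E → ℝ) : Prop where
  nonneg : ∀ x, 0 ≤ N x
  eq_zero_iff : ∀ x, N x = 0 ↔ x = 0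
  map_smul : ∀ (a : ℝ) x, N (a • x) = |a| * N x
  rpow_add_le : ∀ x y, N (x + y) ^ p ≤ N x ^ p + N y ^ p

def closedBallOf {E : Type*} [AddCommGroup E] (N : E → ℝ) (a : E) (r : ℝ) : Set E :=
  {x | N (x - a) ≤ r}

namespace IsPNorm

section Module

variable {E : Type*} [AddCommGroup E] [Module ℝ E] {p : ℝ} {N : E → ℝ}

lemma map_zero (hN : IsPNorm p N) : N 0 = 0 := (hN.eq_zero_iff 0).2 rfl

lemma map_neg (hN : IsPNorm p N) (x : E) : N (-x) = N x := by
  simpa using hN.map_smul (-1) x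

lemma map_sub_rev (hN : IsPNorm p N) (x y : E) : N (x - y) = N (y - x) := by
  rw [← neg_sub, hN.map_neg]

lemma rpow_sub_le (hN : IsPNorm p N) (x y z : E) :
    N (x - z) ^ p ≤ N (x - y) ^ p + N (y - z) ^ p := by
  simpa using hN.rpow_add_le (x - y) (y - z)

lemma abs_rpow_sub_rpow_le (hN : IsPNorm p N) (x y : E) :
    |N x ^ p - N y ^ p| ≤ N (x - y) ^ p := by
  have hx := hN.rpow_sub_le x y 0
  have hy := hN.rpow_sub_le y x 0
  simp only [sub_zero] at hx hy
  rw [abs_sub_le_iff, hN.map_sub_rev y x] at *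
  constructor <;> linarith

lemma rpow_sum_le (hN : IsPNorm p N) (hp : 0 < p) {ι : Type*} (s : Finset ι) (f : ι → E) :
    N (∑ i ∈ s, f i) ^ p ≤ ∑ i ∈ s, N (f i) ^ p := by
  classical
  induction s using Finset.induction with
  | empty => simp [hN.map_zero, Real.zero_rpow hp.ne']
  | insert i s hi ih =>
    rw [Finset.sum_insert hi, Finset.sum_insert hi]
    linarith [hN.rpow_add_le (f i) (∑ j ∈ s, f j)]

lemma closedBallOf_eq_vadd_smul (hN : IsPNorm p N) (a : E) {r : ℝ} (hr : 0 < r) :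
    closedBallOf N a r = a +ᵥ r • closedBallOf N 0 1 := by
  ext x
  rw [mem_vadd_set_iff_neg_vadd_mem, mem_smul_set_iff_inv_smul_mem₀ hr.ne']
  simp only [closedBallOf, mem_ofPred_eq, vadd_eq_add, neg_add_eq_sub, sub_zero, hN.map_smul,
    abs_of_pos (inv_pos.2 hr), inv_mul_le_iff₀ hr, mul_one]

lemma pairwiseDisjoint_closedBallOf (hN : IsPNorm p N) (hp : 0 < p) {T : Set E} {ρ τ : ℝ}
    (hρ : 0 ≤ ρ) (hτ : 2 * τ ^ p ≤ ρ ^ p) (hT : T.Pairwise fun a b => ρ < N (a - b)) :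
    T.PairwiseDisjoint fun a => closedBallOf N a τ := by
  intro a ha b hb hab
  refine Set.disjoint_left.2 fun x (hxa : N (x - a) ≤ τ) (hxb : N (x - b) ≤ τ) => ?_
  have hsep : ρ ^ p < N (a - b) ^ p := Real.rpow_lt_rpow hρ (hT ha hb hab) hp
  have hxa' := Real.rpow_le_rpow (hN.nonneg _) hxa hp.le
  have hxb' := Real.rpow_le_rpow (hN.nonneg _) hxb hp.le
  have htri := hN.rpow_sub_le a x b
  rw [hN.map_sub_rev a x] at htri
  linarith

lemma closedBallOf_subset (hN : IsPNorm p N) (hp : 0 < p) {a : E} (ha : N a ≤ 1) {τ R : ℝ}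
    (hR : 0 ≤ R) (hτR : 1 + τ ^ p ≤ R ^ p) : closedBallOf N a τ ⊆ closedBallOf N 0 R := by
  intro x (hx : N (x - a) ≤ τ)
  show N (x - 0) ≤ R
  rw [sub_zero, ← Real.rpow_le_rpow_iff (hN.nonneg x) hR hp]
  have hx' := Real.rpow_le_rpow (hN.nonneg _) hx hp.le
  have ha' := Real.rpow_le_one (hN.nonneg a) ha hp.le
  have htri := hN.rpow_sub_le x a 0
  simp only [sub_zero] at htri
  linarith

/-- A maximal `ρ`-separated subset of `B` is a `ρ`-net of `B`. -/
lemma exists_finset_cover_of_card_le (hN : IsPNorm p N) {B : Set E} {ρ : ℝ} (hρ : 0 ≤ ρ)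
    {M : ℕ} (hM : ∀ T : Finset E, ↑T ⊆ B → (T : Set E).Pairwise (fun a b => ρ < N (a - b)) →
      T.card ≤ M) :
    ∃ S : Finset E, S.card ≤ M ∧ ∀ x ∈ B, ∃ y ∈ S, N (x - y) ≤ ρ := by
  classical
  let P (m : ℕ) : Prop := ∃ T : Finset E, ↑T ⊆ B ∧
    (T : Set E).Pairwise (fun a b => ρ < N (a - b)) ∧ T.card = m
  obtain ⟨T, hTB, hTsep, hTcard⟩ : P (Nat.findGreatest P M) :=
    Nat.findGreatest_spec (Nat.zero_le M) ⟨∅, by simp⟩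
  refine ⟨T, hTcard ▸ Nat.findGreatest_le M, fun x hx => ?_⟩
  by_contra! hfar
  have hxT : x ∉ T := fun hxT => by
    have := hfar x hxT
    rw [sub_self, hN.map_zero] at this
    linarith
  have hsep : ((insert x T : Finset E) : Set E).Pairwise (fun a b => ρ < N (a - b)) := by
    rw [Finset.coe_insert]
    exact hTsep.insert fun b hb _ => ⟨hfar b hb, hN.map_sub_rev x b ▸ hfar b hb⟩
  have hxTB : ((insert x T : Finset E) : Set E) ⊆ B := by
    simpa using insert_subset hx hTB
  have hmax : (insert x T).card ≤ Nat.findGreatest P M :=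
    Nat.le_findGreatest (hM _ hxTB hsep) ⟨_, hxTB, hsep, rfl⟩
  rw [Finset.card_insert_of_notMem hxT, hTcard] at hmax
  omega

end Module

section NormedSpace

variable {E : Type*} [NormedAddCommGroup E] [NormedSpace ℝ E] [FiniteDimensional ℝ E]
  {p : ℝ} {N : E → ℝ}

lemma exists_rpow_le_mul_norm_rpow (hN : IsPNorm p N) (hp : 0 < p) :
    ∃ C, ∀ x, N x ^ p ≤ C * ‖x‖ ^ p := by
  let b := Module.finBasis ℝ E
  let L : E →L[ℝ] (Fin (finrank ℝ E) → ℝ) := LinearMap.toContinuousLinearMap b.equivFun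
  refine ⟨‖L‖ ^ p * ∑ i, N (b i) ^ p, fun x => ?_⟩
  have hcoord : ∀ i, |b.equivFun x i| ≤ ‖L‖ * ‖x‖ := fun i =>
    (norm_le_pi_norm (L x) i).trans (L.le_opNorm x)
  calc N x ^ p = N (∑ i, b.equivFun x i • b i) ^ p := by rw [b.sum_equivFun]
    _ ≤ ∑ i, N (b.equivFun x i • b i) ^ p := hN.rpow_sum_le hp _ _
    _ = ∑ i, |b.equivFun x i| ^ p * N (b i) ^ p := by
      simp only [hN.map_smul, Real.mul_rpow (abs_nonneg _) (hN.nonneg _)]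
    _ ≤ ∑ i, (‖L‖ * ‖x‖) ^ p * N (b i) ^ p := by
      gcongr with i
      · exact Real.rpow_nonneg (hN.nonneg _) _
      · exact hcoord i
    _ = ‖L‖ ^ p * (∑ i, N (b i) ^ p) * ‖x‖ ^ p := by
      rw [Real.mul_rpow (norm_nonneg _) (norm_nonneg _), Finset.mul_sum, Finset.sum_mul]
      exact Finset.sum_congr rfl fun i _ => by ring

protected lemma continuous (hN : IsPNorm p N) (hp : 0 < p) : Continuous N := by
  obtain ⟨C, hC⟩ := hN.exists_rpow_le_mul_norm_rpow hp
  have hpow : Continuous fun x => N x ^ p := by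
    refine continuous_iff_continuousAt.2 fun x₀ => tendsto_iff_dist_tendsto_zero.2 ?_
    have hlim : Tendsto (fun x => C * ‖x - x₀‖ ^ p) (𝓝 x₀) (𝓝 0) := by
      have : Continuous fun x => C * ‖x - x₀‖ ^ p :=
        continuous_const.mul ((continuous_id.sub continuous_const).norm.rpow_const
          fun _ => Or.inr hp.le)
      simpa [Real.zero_rpow hp.ne'] using this.tendsto x₀
    refine squeeze_zero (fun _ => dist_nonneg) (fun x => ?_) hlim
    exact (hN.abs_rpow_sub_rpow_le x x₀).trans (hC _)
  have hN_eq : N = fun x => (N x ^ p) ^ p⁻¹ :=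
    funext fun x => (Real.rpow_rpow_inv (hN.nonneg x) hp.ne').symm
  rw [hN_eq]
  exact hpow.rpow_const fun _ => Or.inr (inv_nonneg.2 hp.le)

lemma exists_pos_mul_norm_le (hN : IsPNorm p N) (hp : 0 < p) :
    ∃ c > 0, ∀ x, c * ‖x‖ ≤ N x := by
  rcases subsingleton_or_nontrivial E with hE | hE
  · exact ⟨1, one_pos, fun x => by simp [Subsingleton.elim x 0, hN.map_zero]⟩
  obtain ⟨z, hz, hmin⟩ := (isCompact_sphere (0 : E) 1).exists_isMinOn
    (NormedSpace.sphere_nonempty.2 zero_le_one) (hN.continuous hp).continuousOn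
  have hz0 : z ≠ 0 := ne_zero_of_mem_unit_sphere ⟨z, hz⟩
  refine ⟨N z, (hN.nonneg z).lt_of_ne' (mt (hN.eq_zero_iff z).1 hz0), fun x => ?_⟩
  rcases eq_or_ne x 0 with rfl | hx
  · simp [hN.map_zero]
  have hxn : 0 < ‖x‖ := norm_pos_iff.2 hx
  have hmin_x : N z ≤ N (‖x‖⁻¹ • x) := hmin (by simp [norm_smul, hxn.ne'])
  rwa [hN.map_smul, abs_of_pos (inv_pos.2 hxn), le_inv_mul_iff₀ hxn, mul_comm] at hmin_x

lemma isClosed_closedBallOf (hN : IsPNorm p N) (hp : 0 < p) (a : E) (r : ℝ) :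
    IsClosed (closedBallOf N a r) :=
  isClosed_le ((hN.continuous hp).comp (continuous_id.sub continuous_const)) continuous_const

section Measure

variable [MeasurableSpace E] (μ : Measure E) [μ.IsAddHaarMeasure]

lemma measure_closedBallOf_pos (hN : IsPNorm p N) (hp : 0 < p) :
    0 < μ (closedBallOf N 0 1) := by
  have hopen : IsOpen {x | N x < 1} := isOpen_lt (hN.continuous hp) continuous_const
  refine (hopen.measure_pos μ ⟨0, by simp [hN.map_zero]⟩).trans_le (measure_mono ?_)
  intro x (hx : N x < 1)
  show N (x - 0) ≤ 1
  rw [sub_zero]; exact hx.le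

lemma measure_closedBallOf_lt_top (hN : IsPNorm p N) (hp : 0 < p) :
    μ (closedBallOf N 0 1) < ⊤ := by
  obtain ⟨c, hc, hcN⟩ := hN.exists_pos_mul_norm_le hp
  refine (Metric.isBounded_closedBall (x := (0 : E)) (r := c⁻¹)).subset ?_ |>.measure_lt_top
  intro x (hx : N (x - 0) ≤ 1)
  rw [sub_zero] at hx
  rw [Metric.mem_closedBall, dist_zero_right, ← one_div, le_div_iff₀ hc]
  linarith [hcN x]

variable [BorelSpace E]

lemma measure_closedBallOf (hN : IsPNorm p N) (a : E) {r : ℝ} (hr : 0 < r) :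
    μ (closedBallOf N a r) = ENNReal.ofReal (r ^ finrank ℝ E) * μ (closedBallOf N 0 1) := by
  rw [hN.closedBallOf_eq_vadd_smul a hr, measure_vadd, Measure.addHaar_smul,
    abs_of_pos (pow_pos hr _)]

end Measure

end NormedSpace

lemma card_mul_pow_le {X : Type*} [AddCommGroup X] [Module ℝ X] [FiniteDimensional ℝ X]
    {p : ℝ} {N : X → ℝ} (hN : IsPNorm p N) (hp : 0 < p) {T : Finset X} {τ R : ℝ}
    (hτ : 0 < τ) (hR : 0 < R) (hdisj : (T : Set X).PairwiseDisjoint fun a => closedBallOf N a τ)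
    (hsub : ∀ a ∈ T, closedBallOf N a τ ⊆ closedBallOf N 0 R) :
    (T.card : ℝ) * τ ^ finrank ℝ X ≤ R ^ finrank ℝ X := by
  -- any norm will do: it only provides the topology and the Haar measure
  let e := (Module.finBasis ℝ X).equivFun
  let _ : NormedAddCommGroup X := NormedAddCommGroup.induced X _ e e.injective
  let _ : NormedSpace ℝ X := NormedSpace.induced ℝ X _ e
  borelize X
  let μ : Measure X := Measure.addHaar
  have hvol : (T.card : ENNReal) * ENNReal.ofReal (τ ^ finrank ℝ X) * μ (closedBallOf N 0 1) ≤
      ENNReal.ofReal (R ^ finrank ℝ X) * μ (closedBallOf N 0 1) :=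
    calc (T.card : ENNReal) * ENNReal.ofReal (τ ^ finrank ℝ X) * μ (closedBallOf N 0 1)
        = ∑ a ∈ T, μ (closedBallOf N a τ) := by
          simp [hN.measure_closedBallOf μ _ hτ, mul_assoc]
      _ = μ (⋃ a ∈ T, closedBallOf N a τ) :=
          (measure_biUnion_finset hdisj fun a _ =>
            (hN.isClosed_closedBallOf hp a τ).measurableSet).symm
      _ ≤ μ (closedBallOf N 0 R) := measure_mono (iUnion₂_subset hsub)
      _ = ENNReal.ofReal (R ^ finrank ℝ X) * μ (closedBallOf N 0 1) :=
          hN.measure_closedBallOf μ 0 hR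
  rw [ENNReal.mul_le_mul_iff_left (hN.measure_closedBallOf_pos μ hp).ne'
    (hN.measure_closedBallOf_lt_top μ hp).ne, ← ENNReal.ofReal_natCast,
    ← ENNReal.ofReal_mul (Nat.cast_nonneg _)] at hvol
  exact (ENNReal.ofReal_le_ofReal_iff (by positivity)).1 hvol

lemma exists_finset_cover {X : Type*} [AddCommGroup X] [Module ℝ X] [FiniteDimensional ℝ X]
    {p : ℝ} {N : X → ℝ} (hN : IsPNorm p N) (hp : 0 < p) {ε : ℝ} (hε : 0 < ε)
    (hε2 : ε ≤ 2 ^ (1 / p)) :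
    ∃ S : Finset X, (S.card : ℝ) ≤ (4 ^ (1 / p) / ε) ^ finrank ℝ X ∧
      ∀ x, N x ≤ 1 → ∃ y ∈ S, N (x - y) ≤ ε := by
  set τ := ε / 2 ^ (1 / p)
  have h2 : ((2 : ℝ) ^ (1 / p)) ^ p = 2 := by
    rw [one_div, Real.rpow_inv_rpow (by norm_num) hp.ne']
  have hτ : 0 < τ := by positivity
  have hτp : 2 * τ ^ p = ε ^ p := by
    rw [Real.div_rpow hε.le (by positivity), h2]; ring
  have hτ1 : τ ^ p ≤ 1 := Real.rpow_le_one hτ.le (div_le_one_of_le₀ hε2 (by positivity)) hp.le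
  have hratio : 2 ^ (1 / p) / τ = 4 ^ (1 / p) / ε := by
    rw [div_div_eq_mul_div, ← Real.mul_rpow (by norm_num) (by norm_num)]
    norm_num
  obtain ⟨S, hS, hcov⟩ := hN.exists_finset_cover_of_card_le (B := closedBallOf N 0 1) hε.le
    (M := ⌊(4 ^ (1 / p) / ε) ^ finrank ℝ X⌋₊) fun T hTB hTsep => by
      apply Nat.le_floor
      rw [← hratio, div_pow, le_div_iff₀ (by positivity)]
      refine hN.card_mul_pow_le hp hτ (by positivity)
        (hN.pairwiseDisjoint_closedBallOf hp hε.le hτp.le hTsep) fun a ha =>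
          hN.closedBallOf_subset hp ?_ (by positivity) (by linarith)
      simpa [closedBallOf] using hTB ha
  exact ⟨S, (Nat.cast_le.2 hS).trans (Nat.floor_le (by positivity)),
    fun x hx => hcov x (by simpa [closedBallOf] using hx)⟩

end IsPNorm

lemma entropyNumberId_le {X : Type*} [AddCommGroup X] [Module ℝ X] {N : X → ℝ} {k : ℕ}
    {r : ℝ} (hr : 0 < r) (S : Finset X) (hS : S.card ≤ 2 ^ (k - 1))
    (hcov : ∀ x, N x ≤ 1 → ∃ y ∈ S, N (x - y) ≤ r) : entropyNumberId N k ≤ r :=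
  csInf_le ⟨0, fun _ hs => hs.1.le⟩ ⟨hr, S, hS, hcov⟩

theorem entropy_id_upper_general
    {X : Type*} [AddCommGroup X] [Module ℝ X]
    (p : ℝ) (hp0 : 0 < p)
    (n : ℕ) (hn : 0 < n) (hdim : Module.finrank ℝ X = n)
    (N : X → ℝ)
    -- `N` is a p-norm on `X`
    (hnn : ∀ x, 0 ≤ N x)
    (h0 : ∀ x, N x = 0 ↔ x = 0)
    (hhom : ∀ (a : ℝ) (x : X), N (a • x) = |a| * N x)
    (htri : ∀ x y : X, N (x + y) ^ p ≤ N x ^ p + N y ^ p)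
    (k : ℕ) (hk : 1 ≤ k) :
    entropyNumberId N k ≤ 4 ^ (1 / p) * 2 ^ (-(((k : ℝ) - 1) / n)) := by
  set t : ℝ := ((k : ℝ) - 1) / n
  set ε : ℝ := 4 ^ (1 / p) * 2 ^ (-t)
  have hε : 0 < ε := by positivity
  rcases le_or_gt 1 ε with hε1 | hε1
  · exact entropyNumberId_le hε {0} (by simpa using Nat.one_le_two_pow)
      fun x hx => ⟨0, Finset.mem_singleton_self 0, by simpa using hx.trans hε1⟩
  have : FiniteDimensional ℝ X := Module.finite_of_finrank_pos (hdim ▸ hn)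
  have hε2 : ε ≤ 2 ^ (1 / p) := hε1.le.trans (Real.one_le_rpow (by norm_num) (by positivity))
  obtain ⟨S, hS, hcov⟩ := IsPNorm.exists_finset_cover ⟨hnn, h0, hhom, htri⟩ hp0 hε hε2
  refine entropyNumberId_le hε S ?_ hcov
  have hcount : (4 ^ (1 / p) / ε) ^ finrank ℝ X = 2 ^ (k - 1) := by
    rw [hdim, div_mul_cancel_left₀ (by positivity), Real.rpow_neg (by norm_num), inv_inv,
      ← Real.rpow_natCast, ← Real.rpow_mul (by norm_num), div_mul_cancel₀ _ (by positivity),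
      ← Nat.cast_pred hk, Real.rpow_natCast]
  exact_mod_cast hS.trans hcount.le

theorem entropy_id_upper
    {X : Type*} [AddCommGroup X] [Module ℝ X]
    (p : ℝ) (hp0 : 0 < p) (hp1 : p ≤ 1)
    (n : ℕ) (hn : 0 < n) (hdim : Module.finrank ℝ X = n)
    (N : X → ℝ)
    -- `N` is a p-norm on `X`
    (hnn : ∀ x, 0 ≤ N x)
    (h0 : ∀ x, N x = 0 ↔ x = 0)
    (hhom : ∀ (a : ℝ) (x : X), N (a • x) = |a| * N x)
    (htri : ∀ x y : X, N (x + y) ^ p ≤ N x ^ p + N y ^ p)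
    -- `X` is complete
    (hcomp : ∀ u : ℕ → X,
      (∀ ε > (0 : ℝ), ∃ M : ℕ, ∀ m ≥ M, ∀ l ≥ M, N (u m - u l) < ε) →
      ∃ x : X, ∀ ε > (0 : ℝ), ∃ M : ℕ, ∀ l ≥ M, N (u l - x) < ε)
    (k : ℕ) (hk : 1 ≤ k) :
    entropyNumberId N k ≤ 4 ^ (1 / p) * 2 ^ (-(((k : ℝ) - 1) / n)) :=
  entropy_id_upper_general p hp0 n hn hdim N hnn h0 hhom htri k hk
end

section
/- Let 0 < p ≤ q < ∞ and let k, l, n be positive integers, and set p̄ = min(1,p). Then e_{k+l-1}(id : ℓ_p^n(ℝ) → ℓ_q^n(ℝ)) ≤ 2^{1/p̄} · e_k(id : ℓ_p^n(ℝ) → ℓ_p^n(ℝ))^{p/q} · e_l(id : ℓ_p^n(ℝ) → ℓ_∞^n(ℝ))^{1 - p/q}. -/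
/-!
Cover the `ℓ_p` unit ball by `2^(k-1)` `ℓ_p`-balls of radius `r` centred at points `y`, and by
`2^(l-1)` `ℓ_∞`-balls of radius `s` centred at points `t` of the unit ball itself (doubling `s`
to move the centres there). For `x` in the ball, `(x - y) / r` is in the ball, so the
`min(1,p)`-triangle inequality puts `x` within `r 2^{1/p̄}` in `ℓ_p` and within `2 r s` in `ℓ_∞`
of some `y + r t`. The interpolation inequality `‖z‖_q ≤ ‖z‖_p^{p/q} ‖z‖_∞^{1-p/q}` makes these
`2^(k+l-2)` points an `ℓ_q`-cover of radius `2^{1/p̄} r^{p/q} s^{1-p/q}` when `r ≤ 1` (no loss,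
since `e_k(ℓ_p → ℓ_p) ≤ 1`), and letting `r` and `s` decrease to the entropy numbers gives the
claim.
-/

open scoped ENNReal

/-- The `ℓ_p` (quasi-)norm on `ℝ^n`, `0 < p ≤ ∞`. -/
noncomputable def lpnorm (p : ℝ≥0∞) {n : ℕ} (x : Fin n → ℝ) : ℝ :=
  if p = ∞ then ⨆ i, |x i| else (∑ i, |x i| ^ p.toReal) ^ (1 / p.toReal)

/-- The `k`-th dyadic entropy number of the identity `id : ℓ_p^n(ℝ) → ℓ_q^n(ℝ)`:
the infimum of `r > 0` such that the unit ball of `ℓ_p^n` can be covered by `2^(k-1)`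
balls of radius `r` in `ℓ_q^n`. -/
noncomputable def entropyLp (p q : ℝ≥0∞) (n k : ℕ) : ℝ :=
  sInf {r : ℝ | 0 < r ∧ ∃ S : Finset (Fin n → ℝ), S.card ≤ 2 ^ (k - 1) ∧
    ∀ x : Fin n → ℝ, lpnorm p x ≤ 1 → ∃ y ∈ S, lpnorm q (x - y) ≤ r}

section lpnorm

variable {n : ℕ}

lemma lpnorm_top (x : Fin n → ℝ) : lpnorm ∞ x = ⨆ i, |x i| := if_pos rfl

lemma lpnorm_of_ne_top {p : ℝ≥0∞} (hp : p ≠ ∞) (x : Fin n → ℝ) :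
    lpnorm p x = (∑ i, |x i| ^ p.toReal) ^ (1 / p.toReal) := if_neg hp

lemma lpnorm_rpow_toReal {p : ℝ≥0∞} (hp0 : p ≠ 0) (hp : p ≠ ∞) (x : Fin n → ℝ) :
    lpnorm p x ^ p.toReal = ∑ i, |x i| ^ p.toReal := by
  rw [lpnorm_of_ne_top hp, one_div, Real.rpow_inv_rpow (by positivity)
    (ENNReal.toReal_pos hp0 hp).ne']

lemma lpnorm_nonneg (p : ℝ≥0∞) (x : Fin n → ℝ) : 0 ≤ lpnorm p x := by
  by_cases hp : p = ∞
  · subst hp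
    rw [lpnorm_top]
    exact Real.iSup_nonneg fun i => abs_nonneg _
  · rw [lpnorm_of_ne_top hp]
    positivity

lemma lpnorm_neg (p : ℝ≥0∞) (x : Fin n → ℝ) : lpnorm p (-x) = lpnorm p x := by
  simp [lpnorm]

lemma lpnorm_sub_comm (p : ℝ≥0∞) (x y : Fin n → ℝ) : lpnorm p (x - y) = lpnorm p (y - x) := by
  rw [← lpnorm_neg, neg_sub]

lemma lpnorm_smul {p : ℝ≥0∞} (hp0 : p ≠ 0) (c : ℝ) (x : Fin n → ℝ) :
    lpnorm p (c • x) = |c| * lpnorm p x := by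
  by_cases hp : p = ∞
  · subst hp
    simp only [lpnorm_top, Pi.smul_apply, smul_eq_mul, abs_mul]
    exact (Real.mul_iSup_of_nonneg (abs_nonneg c) _).symm
  · have hP : 0 < p.toReal := ENNReal.toReal_pos hp0 hp
    simp only [lpnorm_of_ne_top hp, Pi.smul_apply, smul_eq_mul, abs_mul,
      Real.mul_rpow (abs_nonneg c) (abs_nonneg _), ← Finset.mul_sum]
    rw [Real.mul_rpow (by positivity) (by positivity), ← Real.rpow_mul (abs_nonneg c),
      mul_one_div_cancel hP.ne', Real.rpow_one]

lemma abs_le_lpnorm_top (x : Fin n → ℝ) (i : Fin n) : |x i| ≤ lpnorm ∞ x := by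
  rw [lpnorm_top]
  exact le_ciSup (f := fun j => |x j|) (Set.finite_range _).bddAbove i

lemma lpnorm_top_le_lpnorm {p : ℝ≥0∞} (hp0 : p ≠ 0) (hp : p ≠ ∞) (x : Fin n → ℝ) :
    lpnorm ∞ x ≤ lpnorm p x := by
  have hP : 0 < p.toReal := ENNReal.toReal_pos hp0 hp
  rw [lpnorm_top]
  refine Real.iSup_le (fun i => ?_) (lpnorm_nonneg p x)
  rw [← Real.rpow_le_rpow_iff (abs_nonneg _) (lpnorm_nonneg p x) hP, lpnorm_rpow_toReal hp0 hp]
  exact Finset.single_le_sum (f := fun j => |x j| ^ p.toReal) (fun j _ => by positivity)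
    (Finset.mem_univ i)

lemma lpnorm_top_add_le (x y : Fin n → ℝ) : lpnorm ∞ (x + y) ≤ lpnorm ∞ x + lpnorm ∞ y := by
  rw [lpnorm_top]
  exact Real.iSup_le (fun i => (abs_add_le _ _).trans
    (add_le_add (abs_le_lpnorm_top x i) (abs_le_lpnorm_top y i)))
    (add_nonneg (lpnorm_nonneg _ _) (lpnorm_nonneg _ _))

lemma lpnorm_add_rpow_le {p : ℝ≥0∞} (hp0 : p ≠ 0) (hp : p ≠ ∞) (x y : Fin n → ℝ) :
    lpnorm p (x + y) ^ (min 1 p).toReal ≤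
      lpnorm p x ^ (min 1 p).toReal + lpnorm p y ^ (min 1 p).toReal := by
  rcases le_total 1 p with h1 | h1
  · rw [min_eq_left h1, ENNReal.toReal_one, Real.rpow_one, Real.rpow_one, Real.rpow_one]
    simp only [lpnorm_of_ne_top hp]
    exact Real.Lp_add_le Finset.univ x y (by simpa using ENNReal.toReal_mono hp h1)
  · have hP1 : p.toReal ≤ 1 := ENNReal.toReal_le_of_le_ofReal zero_le_one (by simpa using h1)
    rw [min_eq_right h1, lpnorm_rpow_toReal hp0 hp, lpnorm_rpow_toReal hp0 hp,
      lpnorm_rpow_toReal hp0 hp, ← Finset.sum_add_distrib]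
    refine Finset.sum_le_sum fun i _ => ?_
    calc |x i + y i| ^ p.toReal ≤ (|x i| + |y i|) ^ p.toReal := by gcongr; exact abs_add_le _ _
      _ ≤ |x i| ^ p.toReal + |y i| ^ p.toReal :=
        Real.rpow_add_le_add_rpow (abs_nonneg _) (abs_nonneg _) ENNReal.toReal_nonneg hP1

lemma lpnorm_sub_le_of_le_one {p : ℝ≥0∞} (hp0 : p ≠ 0) (hp : p ≠ ∞) {x y : Fin n → ℝ}
    (hx : lpnorm p x ≤ 1) (hy : lpnorm p y ≤ 1) :
    lpnorm p (x - y) ≤ 2 ^ (1 / (min 1 p).toReal) := by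
  have hpb : 0 < (min 1 p).toReal :=
    ENNReal.toReal_pos (by simp [hp0]) (min_lt_of_left_lt ENNReal.one_lt_top).ne
  rw [one_div, Real.le_rpow_inv_iff_of_pos (lpnorm_nonneg _ _) zero_le_two hpb, sub_eq_add_neg]
  calc lpnorm p (x + -y) ^ (min 1 p).toReal
      ≤ lpnorm p x ^ (min 1 p).toReal + lpnorm p (-y) ^ (min 1 p).toReal :=
        lpnorm_add_rpow_le hp0 hp x (-y)
    _ ≤ 1 + 1 := by
        rw [lpnorm_neg]
        gcongr <;> exact Real.rpow_le_one (lpnorm_nonneg _ _) ‹_› hpb.le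
    _ = 2 := one_add_one_eq_two

lemma lpnorm_le_lpnorm_rpow_mul_lpnorm_top_rpow {p q : ℝ≥0∞} (hp0 : p ≠ 0) (hpq : p ≤ q)
    (hq : q ≠ ∞) (v : Fin n → ℝ) :
    lpnorm q v ≤ lpnorm p v ^ (p.toReal / q.toReal) * lpnorm ∞ v ^ (1 - p.toReal / q.toReal) := by
  have hp : p ≠ ∞ := ne_top_of_le_ne_top hq hpq
  have hq0 : q ≠ 0 := (pos_iff_ne_zero.2 hp0 |>.trans_le hpq).ne'
  have hQ : 0 < q.toReal := ENNReal.toReal_pos hq0 hq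
  have hPQ : p.toReal ≤ q.toReal := ENNReal.toReal_mono hq hpq
  have hM := lpnorm_nonneg ∞ v
  have hN := lpnorm_nonneg p v
  rw [← Real.rpow_le_rpow_iff (lpnorm_nonneg _ _)
      (mul_nonneg (Real.rpow_nonneg hN _) (Real.rpow_nonneg hM _)) hQ,
    Real.mul_rpow (Real.rpow_nonneg hN _) (Real.rpow_nonneg hM _), ← Real.rpow_mul hN,
    ← Real.rpow_mul hM, div_mul_cancel₀ _ hQ.ne', sub_mul, one_mul, div_mul_cancel₀ _ hQ.ne',
    lpnorm_rpow_toReal hp0 hp, lpnorm_rpow_toReal hq0 hq, Finset.sum_mul]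
  refine Finset.sum_le_sum fun i _ => ?_
  calc |v i| ^ q.toReal = |v i| ^ p.toReal * |v i| ^ (q.toReal - p.toReal) := by
        rw [← Real.rpow_add' (abs_nonneg _) (by rw [add_sub_cancel]; exact hQ.ne'),
          add_sub_cancel]
    _ ≤ |v i| ^ p.toReal * lpnorm ∞ v ^ (q.toReal - p.toReal) := by
        gcongr
        exact abs_le_lpnorm_top v i

end lpnorm

lemma toReal_div_toReal_le_one {p q : ℝ≥0∞} (hpq : p ≤ q) (hq : q ≠ ∞) :
    p.toReal / q.toReal ≤ 1 :=
  div_le_one_of_le₀ (ENNReal.toReal_mono hq hpq) ENNReal.toReal_nonneg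

lemma rpow_mul_rpow_le_of_le_one {a b C r s : ℝ} (hb : 0 ≤ b) (hab : a + b = 1)
    (hC : 2 ≤ C) (hr0 : 0 ≤ r) (hr1 : r ≤ 1) (hs : 0 ≤ s) :
    (r * C) ^ a * (r * (2 * s)) ^ b ≤ C * r ^ a * s ^ b := by
  have hCab : C ^ a * C ^ b = C := by
    rw [← Real.rpow_add (by linarith), hab, Real.rpow_one]
  rw [Real.mul_rpow hr0 (by linarith), Real.mul_rpow hr0 (by positivity),
    Real.mul_rpow zero_le_two hs]
  calc r ^ a * C ^ a * (r ^ b * (2 ^ b * s ^ b)) = C ^ a * 2 ^ b * (r ^ a * s ^ b) * r ^ b := by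
        ring
    _ ≤ C ^ a * C ^ b * (r ^ a * s ^ b) * 1 := by
        gcongr
        exact Real.rpow_le_one hr0 hr1 hb
    _ = C * r ^ a * s ^ b := by rw [hCab]; ring

section cover

variable {n : ℕ}

def IsLpCover (p q : ℝ≥0∞) (S : Finset (Fin n → ℝ)) (r : ℝ) : Prop :=
  ∀ x : Fin n → ℝ, lpnorm p x ≤ 1 → ∃ y ∈ S, lpnorm q (x - y) ≤ r

def lpCoverRadii (p q : ℝ≥0∞) (n k : ℕ) : Set ℝ :=
  {r | 0 < r ∧ ∃ S : Finset (Fin n → ℝ), S.card ≤ 2 ^ (k - 1) ∧ IsLpCover p q S r}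

variable {p q : ℝ≥0∞} {k : ℕ}

lemma lpCoverRadii_bddBelow : BddBelow (lpCoverRadii p q n k) := ⟨0, fun _ hr => hr.1.le⟩

lemma entropyLp_le_of_mem_lpCoverRadii {r : ℝ} (hr : r ∈ lpCoverRadii p q n k) :
    entropyLp p q n k ≤ r :=
  csInf_le lpCoverRadii_bddBelow hr

lemma one_mem_lpCoverRadii (h : ∀ x : Fin n → ℝ, lpnorm q x ≤ lpnorm p x) :
    1 ∈ lpCoverRadii p q n k :=
  ⟨one_pos, {0}, by simpa using Nat.one_le_two_pow,
    fun x hx => ⟨0, Finset.mem_singleton_self 0, by simpa using (h x).trans hx⟩⟩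

lemma le_apply_entropyLp {g : ℝ → ℝ} {c : ℝ} (hne : (lpCoverRadii p q n k).Nonempty)
    (hg : ContinuousAt g (entropyLp p q n k)) (h : ∀ r ∈ lpCoverRadii p q n k, c ≤ g r) :
    c ≤ g (entropyLp p q n k) :=
  ContinuousWithinAt.closure_le (csInf_mem_closure hne lpCoverRadii_bddBelow)
    continuousWithinAt_const hg.continuousWithinAt h

lemma IsLpCover.exists_subset_ball {T : Finset (Fin n → ℝ)} {s : ℝ} (hT : IsLpCover p ∞ T s) :
    ∃ T' : Finset (Fin n → ℝ), T'.card ≤ T.card ∧ (∀ t ∈ T', lpnorm p t ≤ 1) ∧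
      IsLpCover p ∞ T' (2 * s) := by
  classical
  choose! φ hφ using fun (t : Fin n → ℝ)
    (h : ∃ w, lpnorm p w ≤ 1 ∧ lpnorm ∞ (w - t) ≤ s) => h
  refine ⟨(T.filter fun t => ∃ w, lpnorm p w ≤ 1 ∧ lpnorm ∞ (w - t) ≤ s).image φ,
    Finset.card_image_le.trans (Finset.card_filter_le _ _), ?_, fun x hx => ?_⟩
  · simp only [Finset.mem_image, Finset.mem_filter]
    rintro _ ⟨t, ⟨-, ht⟩, rfl⟩
    exact (hφ t ht).1
  · obtain ⟨t, htT, hxt⟩ := hT x hx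
    have ht : ∃ w, lpnorm p w ≤ 1 ∧ lpnorm ∞ (w - t) ≤ s := ⟨x, hx, hxt⟩
    refine ⟨φ t, Finset.mem_image_of_mem φ (Finset.mem_filter.2 ⟨htT, ht⟩), ?_⟩
    calc lpnorm ∞ (x - φ t) = lpnorm ∞ ((x - t) + (t - φ t)) := by rw [sub_add_sub_cancel]
      _ ≤ lpnorm ∞ (x - t) + lpnorm ∞ (t - φ t) := lpnorm_top_add_le _ _
      _ ≤ s + s := add_le_add hxt (by rw [lpnorm_sub_comm]; exact (hφ t ht).2)
      _ = 2 * s := (two_mul s).symm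

lemma IsLpCover.exists_mem_image_add_smul (hp0 : p ≠ 0) (hp : p ≠ ∞)
    {S T : Finset (Fin n → ℝ)} {r s : ℝ} (hr : 0 < r) (hS : IsLpCover p p S r)
    (hT_ball : ∀ t ∈ T, lpnorm p t ≤ 1) (hT : IsLpCover p ∞ T s) {x : Fin n → ℝ}
    (hx : lpnorm p x ≤ 1) :
    ∃ u ∈ (S ×ˢ T).image (fun yt => yt.1 + r • yt.2),
      lpnorm p (x - u) ≤ r * 2 ^ (1 / (min 1 p).toReal) ∧ lpnorm ∞ (x - u) ≤ r * s := by
  obtain ⟨y, hyS, hxy⟩ := hS x hx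
  have hw : lpnorm p (r⁻¹ • (x - y)) ≤ 1 := by
    rw [lpnorm_smul hp0, abs_of_pos (inv_pos.2 hr), inv_mul_le_iff₀ hr, mul_one]
    exact hxy
  obtain ⟨t, htT, hwt⟩ := hT _ hw
  have hxu : x - (y + r • t) = r • (r⁻¹ • (x - y) - t) := by
    rw [smul_sub, smul_inv_smul₀ hr.ne']
    abel
  have hyt : y + r • t ∈ (S ×ˢ T).image (fun yt => yt.1 + r • yt.2) :=
    Finset.mem_image.2 ⟨(y, t), Finset.mem_product.2 ⟨hyS, htT⟩, rfl⟩
  refine ⟨y + r • t, hyt, ?_, ?_⟩ <;> rw [hxu, lpnorm_smul (by simp [hp0]), abs_of_pos hr]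
  · exact mul_le_mul_of_nonneg_left (lpnorm_sub_le_of_le_one hp0 hp hw (hT_ball t htT)) hr.le
  · exact mul_le_mul_of_nonneg_left hwt hr.le

lemma mem_lpCoverRadii_add_sub_one (hp : 0 < p) (hpq : p ≤ q) (hq : q ≠ ∞) {l : ℕ}
    (hk : 0 < k) (hl : 0 < l) {r s : ℝ} (hr : r ∈ lpCoverRadii p p n k) (hr1 : r ≤ 1)
    (hs : s ∈ lpCoverRadii p ∞ n l) :
    2 ^ (1 / (min 1 p).toReal) * r ^ (p.toReal / q.toReal) * s ^ (1 - p.toReal / q.toReal) ∈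
      lpCoverRadii p q n (k + l - 1) := by
  obtain ⟨hr0, S, hS_card, hS⟩ := hr
  obtain ⟨hs0, T, hT_card, hT⟩ := hs
  obtain ⟨T', hT'_card, hT'_ball, hT'⟩ := hT.exists_subset_ball
  have hp' : p ≠ ∞ := ne_top_of_le_ne_top hq hpq
  have hpb : 0 < (min 1 p).toReal :=
    ENNReal.toReal_pos (by simp [hp.ne']) (min_lt_of_left_lt ENNReal.one_lt_top).ne
  have hpb1 : (min 1 p).toReal ≤ 1 := by
    simpa using ENNReal.toReal_mono ENNReal.one_ne_top (min_le_left 1 p)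
  refine ⟨by positivity, (S ×ˢ T').image fun yt => yt.1 + r • yt.2, ?_, fun x hx => ?_⟩
  · calc ((S ×ˢ T').image fun yt => yt.1 + r • yt.2).card ≤ S.card * T'.card :=
          Finset.card_image_le.trans (Finset.card_product S T').le
      _ ≤ 2 ^ (k - 1) * 2 ^ (l - 1) := Nat.mul_le_mul hS_card (hT'_card.trans hT_card)
      _ = 2 ^ (k + l - 1 - 1) := by rw [← pow_add]; congr 1; omega
  have hb : 0 ≤ 1 - p.toReal / q.toReal := sub_nonneg.2 (toReal_div_toReal_le_one hpq hq)
  obtain ⟨u, hu, hup, hutop⟩ := hS.exists_mem_image_add_smul hp.ne' hp' hr0 hT'_ball hT' hx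
  refine ⟨u, hu, ?_⟩
  have hxu_p := lpnorm_nonneg p (x - u)
  have hxu_top := lpnorm_nonneg ∞ (x - u)
  calc lpnorm q (x - u)
      ≤ lpnorm p (x - u) ^ (p.toReal / q.toReal) *
          lpnorm ∞ (x - u) ^ (1 - p.toReal / q.toReal) :=
        lpnorm_le_lpnorm_rpow_mul_lpnorm_top_rpow hp.ne' hpq hq _
    _ ≤ (r * 2 ^ (1 / (min 1 p).toReal)) ^ (p.toReal / q.toReal) *
          (r * (2 * s)) ^ (1 - p.toReal / q.toReal) := by
        gcongr
    _ ≤ _ := rpow_mul_rpow_le_of_le_one hb (add_sub_cancel _ _)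
        (by simpa using Real.rpow_le_rpow_of_exponent_le one_le_two (one_le_one_div hpb hpb1))
        hr0.le hr1 hs0.le

lemma entropyLp_add_sub_one_le (hp : 0 < p) (hpq : p ≤ q) (hq : q ≠ ∞)
    {l : ℕ} (hk : 0 < k) (hl : 0 < l) {r s : ℝ} (hr : r ∈ lpCoverRadii p p n k)
    (hs : s ∈ lpCoverRadii p ∞ n l) :
    entropyLp p q n (k + l - 1) ≤
      2 ^ (1 / (min 1 p).toReal) * r ^ (p.toReal / q.toReal) * s ^ (1 - p.toReal / q.toReal) := by
  rcases le_total r 1 with hr1 | h1r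
  · exact entropyLp_le_of_mem_lpCoverRadii <|
      mem_lpCoverRadii_add_sub_one hp hpq hq hk hl hr hr1 hs
  · have hs0 := hs.1
    calc entropyLp p q n (k + l - 1)
        ≤ 2 ^ (1 / (min 1 p).toReal) * 1 ^ (p.toReal / q.toReal) *
            s ^ (1 - p.toReal / q.toReal) :=
          entropyLp_le_of_mem_lpCoverRadii <| mem_lpCoverRadii_add_sub_one hp hpq hq hk hl
            (one_mem_lpCoverRadii fun _ => le_rfl) le_rfl hs
      _ ≤ _ := by gcongr

end cover

theorem entropy_lp_interpolation_general (p q : ℝ≥0∞) (hp : 0 < p) (hpq : p ≤ q) (hq : q ≠ ∞)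
    (k l n : ℕ) (hk : 0 < k) (hl : 0 < l) :
    entropyLp p q n (k + l - 1) ≤
      2 ^ (1 / (min 1 p).toReal) * entropyLp p p n k ^ (p.toReal / q.toReal) *
        entropyLp p ∞ n l ^ (1 - p.toReal / q.toReal) := by
  have hb : 0 ≤ 1 - p.toReal / q.toReal := sub_nonneg.2 (toReal_div_toReal_le_one hpq hq)
  refine le_apply_entropyLp
    (g := fun s => 2 ^ (1 / (min 1 p).toReal) * entropyLp p p n k ^ (p.toReal / q.toReal) *
      s ^ (1 - p.toReal / q.toReal))
    ⟨1, one_mem_lpCoverRadii (lpnorm_top_le_lpnorm hp.ne' (ne_top_of_le_ne_top hq hpq))⟩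
    (continuousAt_const.mul (Real.continuousAt_rpow_const _ _ (Or.inr hb))) fun s hs => ?_
  exact le_apply_entropyLp
    (g := fun r => 2 ^ (1 / (min 1 p).toReal) * r ^ (p.toReal / q.toReal) *
      s ^ (1 - p.toReal / q.toReal))
    ⟨1, one_mem_lpCoverRadii fun _ => le_rfl⟩
    ((continuousAt_const.mul (Real.continuousAt_rpow_const _ _ (Or.inr (by positivity)))).mul
      continuousAt_const)
    fun r hr => entropyLp_add_sub_one_le hp hpq hq hk hl hr hs

theorem entropy_lp_interpolation (p q : ℝ≥0∞) (hp : 0 < p) (hpq : p ≤ q) (hq : q ≠ ∞)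
    (k l n : ℕ) (hk : 0 < k) (hl : 0 < l) (hn : 0 < n) :
    entropyLp p q n (k + l - 1) ≤
      2 ^ (1 / (min 1 p).toReal) * entropyLp p p n k ^ (p.toReal / q.toReal) *
        entropyLp p ∞ n l ^ (1 - p.toReal / q.toReal) :=
  entropy_lp_interpolation_general p q hp hpq hq k l n hk hl
end

section
/- Let m, n ∈ ℕ with m ≤ n/4 and let H_m = {x ∈ {-1,0,1}^n : ∑|x_i| = 2m}. Then there is a subset A_m ⊆ H_m with cardinality at least (n/(2m))^m such that any two distinct x, y ∈ A_m differ in more than m coordinates. -/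
open Finset

namespace SepSub

def sgn (s : Bool) : ℤ := if s then 1 else -1

lemma sgn_ne_zero (s : Bool) : sgn s ≠ 0 := by cases s <;> simp [sgn]

lemma abs_sgn (s : Bool) : |sgn s| = 1 := by cases s <;> simp [sgn]

lemma sgn_inj : Function.Injective sgn := by decide

variable {b : ℕ}

def bv (p q : Fin b) (s t : Bool) : Fin b → ℤ :=
  fun j => if j = p then sgn s else if j = q then sgn t else 0

lemma bv_apply_p (p q : Fin b) (s t : Bool) : bv p q s t p = sgn s := by simp [bv]

lemma bv_apply_q {p q : Fin b} (hpq : p ≠ q) (s t : Bool) : bv p q s t q = sgn t := by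
  simp [bv, hpq.symm]

lemma bv_apply_of_ne {p q j : Fin b} (hp : j ≠ p) (hq : j ≠ q) (s t : Bool) :
    bv p q s t j = 0 := by simp [bv, hp, hq]

lemma bv_ne_zero_iff (p q j : Fin b) (s t : Bool) :
    bv p q s t j ≠ 0 ↔ (j = p ∨ j = q) := by
  unfold bv
  split_ifs with h1 h2
  · simp [sgn_ne_zero, h1]
  · simp [sgn_ne_zero, h2]
  · simp [h1, h2]

lemma abs_bv_le (p q j : Fin b) (s t : Bool) : |bv p q s t j| ≤ 1 := by
  unfold bv
  split_ifs <;> simp [abs_sgn]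

lemma supp_bv {p q : Fin b} (hpq : p ≠ q) (s t : Bool) :
    univ.filter (fun j => bv p q s t j ≠ 0) = {p, q} := by
  ext j
  simp [bv_ne_zero_iff]

lemma sum_abs_bv {p q : Fin b} (hpq : p ≠ q) (s t : Bool) :
    ∑ j, |bv p q s t j| = 2 := by
  have h : ∑ j, |bv p q s t j| = ∑ j ∈ ({p, q} : Finset (Fin b)), |bv p q s t j| := by
    refine (Finset.sum_subset (subset_univ _) ?_).symm
    intro j _ hj
    simp only [mem_insert, mem_singleton, not_or] at hj
    rw [bv_apply_of_ne hj.1 hj.2, abs_zero]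
  rw [h, Finset.sum_pair hpq, bv_apply_p, bv_apply_q hpq, abs_sgn, abs_sgn]; norm_num

def Pb (b : ℕ) : Finset (Fin b × Fin b) := univ.filter fun z => z.1 < z.2

def Db (b : ℕ) : Finset ((Fin b × Fin b) × Bool × Bool) := Pb b ×ˢ univ

def Φ (z : (Fin b × Fin b) × Bool × Bool) : Fin b → ℤ := bv z.1.1 z.1.2 z.2.1 z.2.2

def Tb (b : ℕ) : Finset (Fin b → ℤ) := (Db b).image Φ

lemma phi_injOn : Set.InjOn (Φ (b := b)) (Db b) := by
  rintro ⟨⟨p, q⟩, s, t⟩ h1 ⟨⟨p', q'⟩, s', t'⟩ h2 heq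
  simp only [Db, Pb, mem_coe, mem_product, mem_filter, mem_univ, true_and] at h1 h2
  have hpq : p ≠ q := ne_of_lt h1.1
  have hpq' : p' ≠ q' := ne_of_lt h2.1
  have hp : p = p' ∨ p = q' := by
    have := (bv_ne_zero_iff p' q' p s' t').mp (by
      rw [show bv p' q' s' t' = bv p q s t from heq.symm, bv_apply_p]; exact sgn_ne_zero s)
    exact this
  have hq : q = p' ∨ q = q' := by
    have := (bv_ne_zero_iff p' q' q s' t').mp (by
      rw [show bv p' q' s' t' = bv p q s t from heq.symm, bv_apply_q hpq]; exact sgn_ne_zero t)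
    exact this
  have hp' : p' = p ∨ p' = q := by
    have := (bv_ne_zero_iff p q p' s t).mp (by
      rw [show bv p q s t = bv p' q' s' t' from heq, bv_apply_p]; exact sgn_ne_zero s')
    exact this
  have hpp : p = p' ∧ q = q' := by
    have e1 : p.val < q.val := h1.1
    have e2 : p'.val < q'.val := h2.1
    have f1 : p.val = p'.val ∨ p.val = q'.val := by
      rcases hp with h | h <;> [left; right] <;> rw [h]
    have f2 : q.val = p'.val ∨ q.val = q'.val := by
      rcases hq with h | h <;> [left; right] <;> rw [h]
    have f3 : p'.val = p.val ∨ p'.val = q.val := by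
      rcases hp' with h | h <;> [left; right] <;> rw [h]
    have : p.val = p'.val ∧ q.val = q'.val := by omega
    exact ⟨Fin.ext this.1, Fin.ext this.2⟩
  obtain ⟨hP, hQ⟩ := hpp
  subst hP; subst hQ
  have hs : s = s' := sgn_inj (by
    have := congrFun heq p
    rwa [Φ, Φ, bv_apply_p, bv_apply_p] at this)
  have ht : t = t' := sgn_inj (by
    have := congrFun heq q
    rwa [Φ, Φ, bv_apply_q hpq, bv_apply_q hpq] at this)
  subst hs; subst ht; rfl

lemma mem_Tb {v : Fin b → ℤ} (hv : v ∈ Tb b) :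
    ∃ p q : Fin b, p < q ∧ ∃ s t : Bool, v = bv p q s t := by
  simp only [Tb, mem_image, Db, Pb, mem_product, mem_filter, mem_univ, true_and] at hv
  obtain ⟨⟨⟨p, q⟩, s, t⟩, ⟨h1, _⟩, rfl⟩ := hv
  exact ⟨p, q, h1, s, t, rfl⟩

lemma Tb_abs_le {v : Fin b → ℤ} (hv : v ∈ Tb b) (j : Fin b) : |v j| ≤ 1 := by
  obtain ⟨p, q, _, s, t, rfl⟩ := mem_Tb hv
  exact abs_bv_le p q j s t

lemma Tb_sum_abs {v : Fin b → ℤ} (hv : v ∈ Tb b) : ∑ j, |v j| = 2 := by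
  obtain ⟨p, q, hpq, s, t, rfl⟩ := mem_Tb hv
  exact sum_abs_bv (ne_of_lt hpq) s t


def gw (u : Fin b → ℤ) (j : Fin b) (σ : ℤ) : ℕ :=
  (if u j = σ then 0 else 1) + (if u j = 0 then 1 else 0)

lemma card_filter_pair {p q : Fin b} (hpq : p ≠ q) (P : Fin b → Prop) [DecidablePred P] :
    (({p, q} : Finset (Fin b)).filter P).card
      = (if P p then 1 else 0) + (if P q then 1 else 0) := by
  rw [show ({p, q} : Finset (Fin b)) = insert p {q} from rfl, filter_insert, filter_singleton]
  split_ifs with h1 h2 h2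
  · rw [card_insert_of_notMem (by simp [hpq])]; simp
  · simp
  · simp
  · simp

lemma hd_bv {u : Fin b → ℤ} (hu : u ∈ Tb b) {p q : Fin b} (hpq : p ≠ q) (s t : Bool) :
    hammingDist u (bv p q s t) = gw u p (sgn s) + gw u q (sgn t) := by
  obtain ⟨p₀, q₀, hlt₀, s₀, t₀, rfl⟩ := mem_Tb hu
  set u := bv p₀ q₀ s₀ t₀ with hu_def
  set v := bv p q s t with hv_def
  have hSu : (univ.filter fun j => u j ≠ 0) = {p₀, q₀} := supp_bv (ne_of_lt hlt₀) s₀ t₀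
  have hSucard : (univ.filter fun j => u j ≠ 0).card = 2 := by
    rw [hSu]; exact card_pair (ne_of_lt hlt₀)
  have hsplit : hammingDist u v
      = ((univ.filter fun j => u j ≠ v j) ∩ {p, q}).card
        + ((univ.filter fun j => u j ≠ v j) \ {p, q}).card := by
    rw [hammingDist]
    exact (card_inter_add_card_sdiff _ _).symm
  have hinter : (univ.filter fun j => u j ≠ v j) ∩ {p, q}
      = ({p, q} : Finset (Fin b)).filter (fun j => u j ≠ v j) := by
    ext j; simp [mem_filter, and_comm]
  have hsdiff : (univ.filter fun j => u j ≠ v j) \ {p, q}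
      = (univ.filter fun j => u j ≠ 0) \ {p, q} := by
    ext j
    simp only [mem_sdiff, mem_filter, mem_univ, true_and, mem_insert, mem_singleton, not_or]
    constructor
    · rintro ⟨h1, h2, h3⟩
      refine ⟨?_, h2, h3⟩
      rwa [hv_def, bv_apply_of_ne h2 h3 s t] at h1
    · rintro ⟨h1, h2, h3⟩
      refine ⟨?_, h2, h3⟩
      rw [hv_def, bv_apply_of_ne h2 h3 s t]
      exact h1
  have hsd2 : ((univ.filter fun j => u j ≠ 0) ∩ {p, q}).card
      + ((univ.filter fun j => u j ≠ 0) \ {p, q}).card = 2 := by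
    rw [card_inter_add_card_sdiff, hSucard]
  have hinter2 : (univ.filter fun j => u j ≠ 0) ∩ {p, q}
      = ({p, q} : Finset (Fin b)).filter (fun j => u j ≠ 0) := by
    ext j; simp [mem_filter, and_comm]
  rw [hsplit, hinter, hsdiff, card_filter_pair hpq, ]
  rw [hinter2, card_filter_pair hpq] at hsd2
  have hvp : v p = sgn s := bv_apply_p p q s t
  have hvq : v q = sgn t := bv_apply_q hpq s t
  rw [hvp, hvq]
  have e1 : ∀ (a c : ℤ), (if a ≠ c then 1 else 0) = (if a = c then 0 else 1) := by
    intro a c; split_ifs <;> tauto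
  simp only [e1] at hsd2 ⊢
  unfold gw
  split_ifs at hsd2 ⊢ <;> omega

noncomputable def Aw (u : Fin b → ℤ) (l : ℝ) (j : Fin b) : ℝ :=
  l ^ (gw u j 1) + l ^ (gw u j (-1))

lemma Aw_nonneg {u : Fin b → ℤ} {l : ℝ} (hl : 0 ≤ l) (j : Fin b) : 0 ≤ Aw u l j := by
  unfold Aw; positivity

lemma Aw_of_sgn {u : Fin b → ℤ} {l : ℝ} {j : Fin b} (s : Bool) (h : u j = sgn s) :
    Aw u l j = 1 + l := by
  cases s <;> simp [Aw, gw, h, sgn] <;> ring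

lemma Aw_of_zero {u : Fin b → ℤ} {l : ℝ} {j : Fin b} (h : u j = 0) :
    Aw u l j = 2 * l ^ 2 := by
  simp [Aw, gw, h]; ring

lemma two_le_of_ne {p₀ q₀ : Fin b} (hpq : p₀ ≠ q₀) : 2 ≤ b := by
  have h1 := p₀.isLt; have h2 := q₀.isLt
  have h3 : p₀.val ≠ q₀.val := fun h => hpq (Fin.ext h)
  omega

lemma sum_Aw {l : ℝ} {p₀ q₀ : Fin b} (hpq : p₀ ≠ q₀) (s₀ t₀ : Bool) :
    ∑ j, Aw (bv p₀ q₀ s₀ t₀) l j = 2 * (1 + l) + ((b : ℝ) - 2) * (2 * l ^ 2) := by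
  have h2b : 2 ≤ b := two_le_of_ne hpq
  have hsub : ({p₀, q₀} : Finset (Fin b)) ⊆ univ := subset_univ _
  rw [← Finset.sum_sdiff hsub, Finset.sum_pair hpq]
  have hp : Aw (bv p₀ q₀ s₀ t₀) l p₀ = 1 + l := Aw_of_sgn s₀ (bv_apply_p p₀ q₀ s₀ t₀)
  have hq : Aw (bv p₀ q₀ s₀ t₀) l q₀ = 1 + l := Aw_of_sgn t₀ (bv_apply_q hpq s₀ t₀)
  have hrest : ∑ j ∈ univ \ {p₀, q₀}, Aw (bv p₀ q₀ s₀ t₀) l j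
      = ((b : ℝ) - 2) * (2 * l ^ 2) := by
    have hval : ∀ j ∈ univ \ {p₀, q₀}, Aw (bv p₀ q₀ s₀ t₀) l j = 2 * l ^ 2 := by
      intro j hj
      simp only [mem_sdiff, mem_insert, mem_singleton, not_or] at hj
      exact Aw_of_zero (bv_apply_of_ne hj.2.1 hj.2.2 s₀ t₀)
    rw [Finset.sum_congr rfl hval, Finset.sum_const, nsmul_eq_mul, card_sdiff_of_subset hsub,
      card_univ, Fintype.card_fin, card_pair hpq, Nat.cast_sub h2b]
    norm_num
  rw [hp, hq, hrest]; ring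

lemma sum_sq_Aw {l : ℝ} (hl : 0 ≤ l) {p₀ q₀ : Fin b} (hpq : p₀ ≠ q₀) (s₀ t₀ : Bool) :
    2 * (1 + l) ^ 2 ≤ ∑ j, (Aw (bv p₀ q₀ s₀ t₀) l j) ^ 2 := by
  have hp : Aw (bv p₀ q₀ s₀ t₀) l p₀ = 1 + l := Aw_of_sgn s₀ (bv_apply_p p₀ q₀ s₀ t₀)
  have hq : Aw (bv p₀ q₀ s₀ t₀) l q₀ = 1 + l := Aw_of_sgn t₀ (bv_apply_q hpq s₀ t₀)
  calc 2 * (1 + l) ^ 2 = ∑ j ∈ ({p₀, q₀} : Finset (Fin b)), (Aw (bv p₀ q₀ s₀ t₀) l j) ^ 2 := by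
        rw [Finset.sum_pair hpq, hp, hq]; ring
    _ ≤ ∑ j, (Aw (bv p₀ q₀ s₀ t₀) l j) ^ 2 :=
        Finset.sum_le_sum_of_subset_of_nonneg (subset_univ _) (fun j _ _ => sq_nonneg _)

lemma sum_pairs_le (A : Fin b → ℝ) (hA : ∀ j, 0 ≤ A j) :
    ∑ z ∈ Pb b, A z.1 * A z.2 ≤ ((∑ j, A j) ^ 2 - ∑ j, (A j) ^ 2) / 2 := by
  have hswap : ∑ z ∈ (Pb b).image Prod.swap, A z.1 * A z.2 = ∑ z ∈ Pb b, A z.1 * A z.2 := by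
    rw [Finset.sum_image (fun x _ y _ h => Prod.swap_injective h)]
    exact Finset.sum_congr rfl fun z _ => mul_comm _ _
  have hdiag : ∑ z ∈ (univ : Finset (Fin b)).diag, A z.1 * A z.2 = ∑ j, (A j) ^ 2 := by
    have : (univ : Finset (Fin b)).diag = univ.image (fun j => (j, j)) := by
      ext z
      simp only [Finset.mem_diag, mem_univ, true_and, mem_image]
      constructor
      · intro h
        exact ⟨z.1, by cases z with | mk a c => simp_all⟩
      · rintro ⟨a, rfl⟩
        rfl
    rw [this, Finset.sum_image (fun x _ y _ h => by simpa using congrArg Prod.fst h)]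
    exact Finset.sum_congr rfl fun j _ => (sq (A j)).symm
  have hd1 : Disjoint (Pb b) ((Pb b).image Prod.swap) := by
    rw [Finset.disjoint_left]
    rintro ⟨x, y⟩ hz hz'
    simp only [Pb, mem_filter, mem_univ, true_and] at hz
    simp only [Pb, mem_image, mem_filter, mem_univ, true_and] at hz'
    obtain ⟨⟨a, c⟩, hac, heq⟩ := hz'
    have : c = x ∧ a = y := by
      simpa [Prod.ext_iff] using heq
    exact absurd (this.1 ▸ this.2 ▸ hac) (not_lt.mpr (le_of_lt hz))
  have hd2 : Disjoint (Pb b ∪ (Pb b).image Prod.swap) (univ : Finset (Fin b)).diag := by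
    rw [Finset.disjoint_left]
    rintro ⟨x, y⟩ hz hz'
    rw [Finset.mem_diag] at hz'
    have hxy : x = y := hz'.2
    rcases Finset.mem_union.1 hz with h | h
    · simp only [Pb, mem_filter] at h
      have hlt : x < y := h.2
      rw [hxy] at hlt
      exact absurd hlt (lt_irrefl _)
    · simp only [Pb, mem_image, mem_filter, mem_univ, true_and] at h
      obtain ⟨⟨a, c⟩, hac, heq⟩ := h
      have hca : c = x ∧ a = y := by simpa [Prod.ext_iff] using heq
      have hyx : y < x := hca.1 ▸ hca.2 ▸ hac
      rw [hxy] at hyx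
      exact absurd hyx (lt_irrefl _)
  have hsq : (∑ j, A j) ^ 2 = ∑ z ∈ univ ×ˢ univ, A z.1 * A z.2 := by
    rw [sq, Finset.sum_mul_sum, Finset.sum_product]
  have hsum : ∑ z ∈ (Pb b ∪ (Pb b).image Prod.swap) ∪ (univ : Finset (Fin b)).diag,
      A z.1 * A z.2 ≤ ∑ z ∈ univ ×ˢ univ, A z.1 * A z.2 :=
    Finset.sum_le_sum_of_subset_of_nonneg (by intro z _; simp [Finset.mem_product])
      (fun z _ _ => mul_nonneg (hA _) (hA _))
  rw [Finset.sum_union hd2, Finset.sum_union hd1, hswap, hdiag] at hsum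
  rw [hsq]
  linarith

lemma block_sum {l : ℝ} (hl0 : 0 < l) {u : Fin b → ℤ} (hu : u ∈ Tb b) :
    ∑ v ∈ Tb b, l ^ hammingDist u v
      ≤ ((2 * (1 + l) + ((b : ℝ) - 2) * (2 * l ^ 2)) ^ 2 - 2 * (1 + l) ^ 2) / 2 := by
  obtain ⟨p₀, q₀, hlt₀, s₀, t₀, hu_eq⟩ := mem_Tb hu
  have key : ∑ v ∈ Tb b, l ^ hammingDist u v = ∑ z ∈ Pb b, Aw u l z.1 * Aw u l z.2 := by
    rw [Tb, Finset.sum_image (fun x hx y hy h => phi_injOn hx hy h), Db, Finset.sum_product]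
    refine Finset.sum_congr rfl fun pq hpq => ?_
    have hne : pq.1 ≠ pq.2 := by
      simp only [Pb, mem_filter] at hpq; exact ne_of_lt hpq.2
    rw [Fintype.sum_prod_type]
    rw [show Aw u l pq.1 * Aw u l pq.2
        = ∑ s : Bool, ∑ t : Bool, l ^ gw u pq.1 (sgn s) * l ^ gw u pq.2 (sgn t) by
      simp [Aw, Fintype.sum_bool, sgn]; ring]
    refine Finset.sum_congr rfl fun s _ => Finset.sum_congr rfl fun t _ => ?_
    rw [Φ, hd_bv hu hne s t, pow_add]
  rw [key]
  calc ∑ z ∈ Pb b, Aw u l z.1 * Aw u l z.2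
      ≤ ((∑ j, Aw u l j) ^ 2 - ∑ j, (Aw u l j) ^ 2) / 2 :=
        sum_pairs_le _ (Aw_nonneg hl0.le)
    _ ≤ ((2 * (1 + l) + ((b : ℝ) - 2) * (2 * l ^ 2)) ^ 2 - 2 * (1 + l) ^ 2) / 2 := by
        have h1 : ∑ j, Aw u l j = 2 * (1 + l) + ((b : ℝ) - 2) * (2 * l ^ 2) := by
          rw [hu_eq]; exact sum_Aw (ne_of_lt hlt₀) s₀ t₀
        have h2 : 2 * (1 + l) ^ 2 ≤ ∑ j, (Aw u l j) ^ 2 := by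
          rw [hu_eq]; exact sum_sq_Aw hl0.le (ne_of_lt hlt₀) s₀ t₀
        rw [h1]; linarith


noncomputable def Fb (β l : ℝ) : ℝ :=
  ((2 * (1 + l) + (β - 2) * (2 * l ^ 2)) ^ 2 - 2 * (1 + l) ^ 2) / 2

lemma Fb_expand (β l : ℝ) :
    Fb β l = (1 + l) ^ 2 + 4 * (1 + l) * (β - 2) * l ^ 2 + 2 * (β - 2) ^ 2 * l ^ 4 := by
  unfold Fb; ring

lemma master {β : ℝ} (hβ : 4 ≤ β) :
    ∃ l : ℝ, 0 < l ∧ l ≤ 1 ∧ 0 < Fb β l ∧ (β + 1) / 2 * Fb β l ≤ (2 * β * (β - 1)) * l := by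
  have hβ0 : (0:ℝ) ≤ β := by linarith
  set s : ℝ := Real.sqrt β with hs_def
  have hs2 : 2 ≤ s := by
    have h4 : Real.sqrt 4 ≤ Real.sqrt β := Real.sqrt_le_sqrt hβ
    rwa [show (4:ℝ) = 2 ^ 2 by norm_num, Real.sqrt_sq (by norm_num : (0:ℝ) ≤ 2)] at h4
  have hssq : s ^ 2 = β := Real.sq_sqrt hβ0
  have hs0 : 0 < s := by linarith
  refine ⟨1 / (2 * s), by positivity, ?_, ?_, ?_⟩
  · rw [div_le_one (by positivity)]; linarith
  · rw [Fb_expand]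
    have h1 : (0:ℝ) < (1 + 1 / (2 * s)) ^ 2 := by positivity
    have h2 : (0:ℝ) ≤ 4 * (1 + 1 / (2 * s)) * (β - 2) * (1 / (2 * s)) ^ 2 := by
      have : (0:ℝ) ≤ β - 2 := by linarith
      positivity
    have h3 : (0:ℝ) ≤ 2 * (β - 2) ^ 2 * (1 / (2 * s)) ^ 4 := by positivity
    linarith
  · rw [Fb_expand, ← hssq]
    have hne : s ≠ 0 := ne_of_gt hs0
    rw [div_mul_eq_mul_div, div_le_iff₀ (by norm_num : (0:ℝ) < 2)]
    have ht : 0 ≤ s - 2 := by linarith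
    have key : 32*s^7 - 34*s^6 - 56*s^5 + 2*s^4 - 8*s^3 + 28*s^2 + 16*s - 8
        = 32*(s-2)^7 + 414*(s-2)^6 + 2224*(s-2)^5 + 6362*(s-2)^4 + 10248*(s-2)^3
          + 8892*(s-2)^2 + 3424*(s-2) + 232 := by ring
    have hP : 0 ≤ 32*s^7 - 34*s^6 - 56*s^5 + 2*s^4 - 8*s^3 + 28*s^2 + 16*s - 8 := by
      rw [key]
      have := pow_nonneg ht
      positivity
    rw [← sub_nonneg]
    have hrw : 2 * s ^ 2 * (s ^ 2 - 1) * (1 / (2 * s)) * 2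
        - (s ^ 2 + 1) *
          ((1 + 1 / (2 * s)) ^ 2 + 4 * (1 + 1 / (2 * s)) * (s ^ 2 - 2) * (1 / (2 * s)) ^ 2
            + 2 * (s ^ 2 - 2) ^ 2 * (1 / (2 * s)) ^ 4)
        = (32*s^7 - 34*s^6 - 56*s^5 + 2*s^4 - 8*s^3 + 28*s^2 + 16*s - 8) / (16 * s ^ 4) := by
      field_simp
      ring
    rw [hrw]
    exact div_nonneg hP (by positivity)

lemma greedy {α : Type*} [DecidableEq α] (d : α → α → ℕ) (hd0 : ∀ x, d x x = 0)
    (hsymm : ∀ x y, d x y = d y x) (m : ℕ) (s : Finset α) :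
    ∃ A ⊆ s, (∀ x ∈ A, ∀ y ∈ A, x ≠ y → m < d x y) ∧ ∀ y ∈ s, ∃ a ∈ A, d a y ≤ m := by
  induction s using Finset.strongInduction with
  | _ s ih =>
    by_cases hs : s = ∅
    · subst hs; exact ⟨∅, Finset.Subset.refl _, by simp, by simp⟩
    · obtain ⟨x, hx⟩ := Finset.nonempty_of_ne_empty hs
      have hss : s.filter (fun y => m < d x y) ⊂ s := by
        refine Finset.filter_ssubset.2 ⟨x, hx, ?_⟩
        simp [hd0 x]
      obtain ⟨A, hAs, hsep, hcov⟩ := ih _ hss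
      refine ⟨insert x A, ?_, ?_, ?_⟩
      · exact Finset.insert_subset hx (hAs.trans (Finset.filter_subset _ _))
      · intro a ha c hc hac
        rcases Finset.mem_insert.1 ha with rfl | ha'
        · rcases Finset.mem_insert.1 hc with rfl | hc'
          · exact absurd rfl hac
          · exact (Finset.mem_filter.1 (hAs hc')).2
        · rcases Finset.mem_insert.1 hc with rfl | hc'
          · rw [hsymm a c]; exact (Finset.mem_filter.1 (hAs ha')).2
          · exact hsep a ha' c hc' hac
      · intro y hy
        by_cases hxy : m < d x y
        · obtain ⟨a, haA, hay⟩ := hcov y (Finset.mem_filter.2 ⟨hy, hxy⟩)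
          exact ⟨a, Finset.mem_insert_of_mem haA, hay⟩
        · exact ⟨x, Finset.mem_insert_self _ _, not_lt.1 hxy⟩

lemma card_le_cover {α : Type*} [DecidableEq α] (s A : Finset α) (d : α → α → ℕ) (m : ℕ)
    (hcov : ∀ y ∈ s, ∃ a ∈ A, d a y ≤ m) :
    s.card ≤ ∑ a ∈ A, (s.filter fun y => d a y ≤ m).card := by
  calc s.card ≤ (A.biUnion fun a => s.filter fun y => d a y ≤ m).card := by
        apply Finset.card_le_card
        intro y hy
        obtain ⟨a, haA, hay⟩ := hcov y hy
        exact Finset.mem_biUnion.2 ⟨a, haA, Finset.mem_filter.2 ⟨hy, hay⟩⟩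
    _ ≤ ∑ a ∈ A, (s.filter fun y => d a y ≤ m).card := Finset.card_biUnion_le

lemma Tb_card_lb : b * b - b ≤ (Pb b).card * 2 := by
  classical
  have hinj : Set.InjOn (fun z : Fin b × Fin b => ((min z.1 z.2, max z.1 z.2), decide (z.1 < z.2)))
      ((univ : Finset (Fin b)).offDiag) := by
    rintro ⟨x, y⟩ hz ⟨x', y'⟩ hz' h
    simp only [Finset.mem_coe, Finset.mem_offDiag] at hz hz'
    have h1 : min x y = min x' y' := congrArg (fun w => w.1.1) h
    have h2 : max x y = max x' y' := congrArg (fun w => w.1.2) h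
    have h3 : decide (x < y) = decide (x' < y') := congrArg (fun w => w.2) h
    have h4 : (x < y) ↔ (x' < y') := by
      constructor <;> intro hh
      · exact of_decide_eq_true (h3 ▸ decide_eq_true hh)
      · exact of_decide_eq_true (h3.symm ▸ decide_eq_true hh)
    by_cases hlt : x < y
    · have hlt' : x' < y' := h4.1 hlt
      rw [min_eq_left hlt.le, min_eq_left hlt'.le] at h1
      rw [max_eq_right hlt.le, max_eq_right hlt'.le] at h2
      simp [Prod.ext_iff, h1, h2]
    · have hyx : y < x := lt_of_le_of_ne (not_lt.1 hlt) (Ne.symm hz.2.2)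
      have hlt' : ¬ x' < y' := fun hh => hlt (h4.2 hh)
      have hyx' : y' < x' := lt_of_le_of_ne (not_lt.1 hlt') (Ne.symm hz'.2.2)
      rw [min_eq_right hyx.le, min_eq_right hyx'.le] at h1
      rw [max_eq_left hyx.le, max_eq_left hyx'.le] at h2
      simp [Prod.ext_iff, h1, h2]
  have hmaps : ∀ z ∈ (univ : Finset (Fin b)).offDiag,
      ((min z.1 z.2, max z.1 z.2), decide (z.1 < z.2)) ∈ Pb b ×ˢ (univ : Finset Bool) := by
    intro z hz
    rw [Finset.mem_offDiag] at hz
    refine Finset.mem_product.2 ⟨Finset.mem_filter.2 ⟨Finset.mem_univ _, ?_⟩, Finset.mem_univ _⟩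
    exact min_lt_max.2 hz.2.2
  have hcard := Finset.card_le_card_of_injOn _ hmaps hinj
  simp only [Finset.card_product, Finset.offDiag_card, Finset.card_univ, Fintype.card_fin,
    Fintype.card_bool] at hcard
  omega

lemma Tb_card_eq : (Tb b).card = (Pb b).card * 4 := by
  rw [Tb, Finset.card_image_of_injOn phi_injOn, Db, Finset.card_product]
  simp [Fintype.card_bool]


lemma ball_bound {b m : ℕ} {l : ℝ} (hl0 : 0 < l) (hl1 : l ≤ 1)
    (a : Fin m → Fin b → ℤ) (ha : a ∈ Fintype.piFinset fun _ : Fin m => Tb b) :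
    (((Fintype.piFinset fun _ : Fin m => Tb b).filter
        (fun y => (∑ i, hammingDist (a i) (y i)) ≤ m)).card : ℝ) * l ^ m
      ≤ (Fb b l) ^ m := by
  set S := Fintype.piFinset fun _ : Fin m => Tb b with hS
  set Bl := S.filter (fun y => (∑ i, hammingDist (a i) (y i)) ≤ m) with hBl
  have h1 : ((Bl.card : ℝ)) * l ^ m ≤ ∑ y ∈ Bl, l ^ (∑ i, hammingDist (a i) (y i)) := by
    have : ∀ y ∈ Bl, l ^ m ≤ l ^ (∑ i, hammingDist (a i) (y i)) := by
      intro y hy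
      have hym : (∑ i, hammingDist (a i) (y i)) ≤ m := (Finset.mem_filter.1 hy).2
      exact pow_le_pow_of_le_one hl0.le hl1 hym
    calc ((Bl.card : ℝ)) * l ^ m = ∑ _y ∈ Bl, l ^ m := by rw [Finset.sum_const, nsmul_eq_mul]
      _ ≤ _ := Finset.sum_le_sum this
  have h2 : ∑ y ∈ Bl, l ^ (∑ i, hammingDist (a i) (y i))
      ≤ ∑ y ∈ S, l ^ (∑ i, hammingDist (a i) (y i)) :=
    Finset.sum_le_sum_of_subset_of_nonneg (Finset.filter_subset _ _)
      (fun y _ _ => by positivity)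
  have h3 : ∑ y ∈ S, l ^ (∑ i, hammingDist (a i) (y i))
      = ∏ i, ∑ v ∈ Tb b, l ^ hammingDist (a i) v := by
    rw [Finset.prod_univ_sum]
    exact Finset.sum_congr rfl fun y _ => (Finset.prod_pow_eq_pow_sum univ _ l).symm
  have h4 : ∏ i : Fin m, (∑ v ∈ Tb b, l ^ hammingDist (a i) v) ≤ (Fb b l) ^ m := by
    calc ∏ i : Fin m, (∑ v ∈ Tb b, l ^ hammingDist (a i) v)
        ≤ ∏ _i : Fin m, Fb (b : ℝ) l := by
          refine Finset.prod_le_prod (fun i _ => Finset.sum_nonneg fun v _ => by positivity)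
            (fun i _ => ?_)
          have := block_sum hl0 (Fintype.mem_piFinset.1 ha i)
          rwa [Fb]
      _ = (Fb b l) ^ m := by rw [Finset.prod_const, Finset.card_univ, Fintype.card_fin]
  linarith


end SepSub

open SepSub

theorem exists_separated_subset (m n : ℕ) (hm : 1 ≤ m) (hmn : 4 * m ≤ n) :
    ∃ A : Finset (Fin n → ℤ),
      (∀ x ∈ A, (∀ i, |x i| ≤ 1) ∧ ∑ i, |x i| = 2 * m) ∧
      ((n : ℝ) / (2 * m)) ^ m ≤ (A.card : ℝ) ∧
      ∀ x ∈ A, ∀ y ∈ A, x ≠ y → m < hammingDist x y := by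
  classical
  have hm0 : 0 < m := hm
  set b := n / m with hbdef
  have hb4 : 4 ≤ b := (Nat.le_div_iff_mul_le hm0).2 (by omega)
  have hb0 : 0 < b := by omega
  have hmb : m * b ≤ n := by
    rw [hbdef, mul_comm]; exact Nat.div_mul_le_self n m
  have hnlt : n < m * b + m := by
    have h1 : m * b + n % m = n := by rw [hbdef]; exact Nat.div_add_mod n m
    have h2 : n % m < m := Nat.mod_lt _ hm0
    omega
  -- model space and greedy packing
  set S : Finset (Fin m → Fin b → ℤ) := Fintype.piFinset (fun _ => Tb b) with hSdef
  obtain ⟨A, hAS, hsep, hcov⟩ := greedy (fun x y => ∑ i, hammingDist (x i) (y i))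
      (fun x => by simp) (fun x y => Finset.sum_congr rfl fun i _ => hammingDist_comm _ _) m S
  -- real parameters
  have hb4R : (4 : ℝ) ≤ (b : ℝ) := by exact_mod_cast hb4
  obtain ⟨l, hl0, hl1, hF0, hkey⟩ := master hb4R
  -- counting
  have hScard : S.card = (Tb b).card ^ m := by
    rw [hSdef, Fintype.card_piFinset_const]
  have hball : ∀ a ∈ S, ((S.filter fun y => (∑ i, hammingDist (a i) (y i)) ≤ m).card : ℝ)
      ≤ (Fb b l) ^ m / l ^ m := by
    intro a ha
    rw [le_div_iff₀ (by positivity)]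
    exact ball_bound hl0 hl1 a ha
  have hcount : (S.card : ℝ) ≤ (A.card : ℝ) * ((Fb b l) ^ m / l ^ m) := by
    have h1 := card_le_cover S A (fun x y => ∑ i, hammingDist (x i) (y i)) m hcov
    have h2 : ((∑ a ∈ A, (S.filter fun y => (∑ i, hammingDist (a i) (y i)) ≤ m).card : ℕ) : ℝ)
        ≤ ∑ _a ∈ A, ((Fb b l) ^ m / l ^ m) := by
      push_cast
      exact Finset.sum_le_sum fun a haA => hball a (hAS haA)
    calc (S.card : ℝ) ≤ _ := by exact_mod_cast h1
      _ ≤ ∑ _a ∈ A, ((Fb b l) ^ m / l ^ m) := h2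
      _ = (A.card : ℝ) * ((Fb b l) ^ m / l ^ m) := by
          rw [Finset.sum_const, nsmul_eq_mul]
  have hTnat : 2 * (b * b - b) ≤ (Tb b).card := by
    have h := Tb_card_lb (b := b)
    rw [Tb_card_eq]
    omega
  have hT : 2 * (b : ℝ) * ((b : ℝ) - 1) ≤ ((Tb b).card : ℝ) := by
    have h1 : ((2 * (b * b - b) : ℕ) : ℝ) ≤ ((Tb b).card : ℝ) := by exact_mod_cast hTnat
    have hbb : b ≤ b * b := Nat.le_mul_of_pos_left b hb0
    rw [Nat.cast_mul, Nat.cast_sub hbb] at h1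
    push_cast at h1
    nlinarith [h1]
  -- the key cardinality chain
  have hchain : (((b : ℝ) + 1) / 2) ^ m ≤ (A.card : ℝ) := by
    have hlm : (0 : ℝ) < l ^ m := pow_pos hl0 m
    have hFm : (0 : ℝ) < (Fb b l) ^ m := pow_pos hF0 m
    have hstep : ((b : ℝ) + 1) / 2 ≤ ((Tb b).card : ℝ) * l / Fb b l := by
      rw [le_div_iff₀ hF0]
      calc ((b : ℝ) + 1) / 2 * Fb b l ≤ 2 * (b : ℝ) * ((b : ℝ) - 1) * l := hkey
        _ ≤ ((Tb b).card : ℝ) * l := mul_le_mul_of_nonneg_right hT hl0.le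
    calc (((b : ℝ) + 1) / 2) ^ m ≤ (((Tb b).card : ℝ) * l / Fb b l) ^ m :=
          pow_le_pow_left₀ (by positivity) hstep m
      _ = ((Tb b).card : ℝ) ^ m * l ^ m / (Fb b l) ^ m := by rw [div_pow, mul_pow]
      _ = (S.card : ℝ) * l ^ m / (Fb b l) ^ m := by rw [hScard]; push_cast; ring
      _ ≤ (A.card : ℝ) := by
          rw [div_le_iff₀ hFm]
          have h3 : (S.card : ℝ) * l ^ m ≤ (A.card : ℝ) * ((Fb b l) ^ m / l ^ m) * l ^ m :=
            mul_le_mul_of_nonneg_right hcount hlm.le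
          have h4 : (A.card : ℝ) * ((Fb b l) ^ m / l ^ m) * l ^ m
              = (A.card : ℝ) * (Fb b l) ^ m := by field_simp
          linarith
  have hfrac : (n : ℝ) / (2 * m) ≤ ((b : ℝ) + 1) / 2 := by
    have hmR : (0 : ℝ) < (m : ℝ) := by exact_mod_cast hm0
    rw [div_le_div_iff₀ (by positivity) (by norm_num)]
    have hnR : (n : ℝ) ≤ (m : ℝ) * (b : ℝ) + (m : ℝ) := by exact_mod_cast hnlt.le
    nlinarith [hnR, hmR]
  -- embedding into Fin n → ℤ
  have hJlt : ∀ p : Fin m × Fin b, p.1.val * b + p.2.val < n := by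
    rintro ⟨i, j⟩
    have h1 : i.val + 1 ≤ m := i.isLt
    have h2 : (i.val + 1) * b ≤ m * b := Nat.mul_le_mul_right b h1
    have h3 : j.val < b := j.isLt
    have h4 : i.val * b + j.val < (i.val + 1) * b := by rw [Nat.succ_mul]; omega
    show i.val * b + j.val < n
    omega
  set J : Fin m × Fin b → Fin n := fun p => ⟨p.1.val * b + p.2.val, hJlt p⟩ with hJdef
  have d1 : ∀ (i : Fin m) (j : Fin b), (i.val * b + j.val) / b = i.val := by
    intro i j
    rw [show i.val * b + j.val = j.val + b * i.val by ring, Nat.add_mul_div_left _ _ hb0,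
      Nat.div_eq_of_lt j.isLt, Nat.zero_add]
  have d2 : ∀ (i : Fin m) (j : Fin b), (i.val * b + j.val) % b = j.val := by
    intro i j
    rw [show i.val * b + j.val = j.val + b * i.val by ring, Nat.add_mul_mod_self_left,
      Nat.mod_eq_of_lt j.isLt]
  set e : (Fin m → Fin b → ℤ) → (Fin n → ℤ) := fun x k =>
    if hk : k.val < m * b then
      x ⟨k.val / b, by rwa [Nat.div_lt_iff_lt_mul hb0]⟩ ⟨k.val % b, Nat.mod_lt _ hb0⟩
    else 0 with hedef
  have hJmb : ∀ p : Fin m × Fin b, (J p).val < m * b := by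
    rintro ⟨i, j⟩
    have h2 : (i.val + 1) * b ≤ m * b := Nat.mul_le_mul_right b i.isLt
    have h4 : i.val * b + j.val < (i.val + 1) * b := by rw [Nat.succ_mul]; omega
    show i.val * b + j.val < m * b
    omega
  have heJ : ∀ (x : Fin m → Fin b → ℤ) (p : Fin m × Fin b), e x (J p) = x p.1 p.2 := by
    rintro x ⟨i, j⟩
    show e x (J (i, j)) = x i j
    rw [hedef]
    simp only
    rw [dif_pos (hJmb (i, j))]
    congr 1
    · exact Fin.ext (d1 i j)
    · exact Fin.ext (d2 i j)
  have hJinj : Function.Injective J := by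
    rintro ⟨i, j⟩ ⟨i', j'⟩ h
    have h1 : i.val * b + j.val = i'.val * b + j'.val := congrArg Fin.val h
    have h2 : i.val = i'.val := by rw [← d1 i j, ← d1 i' j', h1]
    have h3 : j.val = j'.val := by rw [← d2 i j, ← d2 i' j', h1]
    exact Prod.ext (Fin.ext h2) (Fin.ext h3)
  have heinj : Function.Injective e := by
    intro x y hxy
    funext i j
    have h := congrFun hxy (J (i, j))
    rwa [heJ, heJ] at h
  have hsumabs : ∀ x ∈ S, ∑ k, |e x k| = 2 * (m : ℤ) := by
    intro x hx
    have himage : ∀ k : Fin n, k ∉ (univ : Finset (Fin m × Fin b)).image J → e x k = 0 := by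
      intro k hk
      by_cases hlt : k.val < m * b
      · exfalso
        apply hk
        refine Finset.mem_image.2 ⟨(⟨k.val / b, by rwa [Nat.div_lt_iff_lt_mul hb0]⟩,
          ⟨k.val % b, Nat.mod_lt _ hb0⟩), Finset.mem_univ _, ?_⟩
        apply Fin.ext
        show (k.val / b) * b + k.val % b = k.val
        have hdm := Nat.div_add_mod k.val b
        have hcm : b * (k.val / b) = (k.val / b) * b := Nat.mul_comm _ _
        omega
      · rw [hedef]; simp only; rw [dif_neg hlt]
    calc ∑ k, |e x k| = ∑ k ∈ (univ : Finset (Fin m × Fin b)).image J, |e x k| := by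
          refine (Finset.sum_subset (Finset.subset_univ _) fun k _ hk => ?_).symm
          rw [himage k hk, abs_zero]
      _ = ∑ p : Fin m × Fin b, |e x (J p)| :=
          Finset.sum_image fun p _ q _ h => hJinj h
      _ = ∑ p : Fin m × Fin b, |x p.1 p.2| := by
          exact Finset.sum_congr rfl fun p _ => by rw [heJ]
      _ = ∑ i : Fin m, ∑ j : Fin b, |x i j| := by rw [Fintype.sum_prod_type]
      _ = ∑ _i : Fin m, (2 : ℤ) :=
          Finset.sum_congr rfl fun i _ => Tb_sum_abs (Fintype.mem_piFinset.1 hx i)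
      _ = 2 * (m : ℤ) := by
          rw [Finset.sum_const, Finset.card_univ, Fintype.card_fin, nsmul_eq_mul]
          ring
  have hdist : ∀ x y : Fin m → Fin b → ℤ,
      (∑ i, hammingDist (x i) (y i)) ≤ hammingDist (e x) (e y) := by
    intro x y
    have hdisj : ∀ i ∈ (univ : Finset (Fin m)), ∀ i' ∈ (univ : Finset (Fin m)), i ≠ i' →
        Disjoint ((univ.filter fun j => x i j ≠ y i j).image (fun j => J (i, j)))
          ((univ.filter fun j => x i' j ≠ y i' j).image (fun j => J (i', j))) := by
      intro i _ i' _ hii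
      rw [Finset.disjoint_left]
      intro k hk hk'
      obtain ⟨j, _, rfl⟩ := Finset.mem_image.1 hk
      obtain ⟨j', _, hJeq⟩ := Finset.mem_image.1 hk'
      exact hii (congrArg Prod.fst (hJinj hJeq)).symm
    have hsum : ∑ i, hammingDist (x i) (y i)
        = ∑ i, ((univ.filter fun j => x i j ≠ y i j).image (fun j => J (i, j))).card := by
      refine Finset.sum_congr rfl fun i _ => ?_
      rw [Finset.card_image_of_injective _
        (fun j j' h => congrArg Prod.snd (hJinj h) : Function.Injective fun j => J (i, j))]
      rfl
    rw [hsum, ← Finset.card_biUnion hdisj]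
    rw [hammingDist]
    apply Finset.card_le_card
    intro k hk
    rw [Finset.mem_biUnion] at hk
    obtain ⟨i, _, hki⟩ := hk
    obtain ⟨j, hj, rfl⟩ := Finset.mem_image.1 hki
    rw [Finset.mem_filter] at hj
    rw [Finset.mem_filter]
    refine ⟨Finset.mem_univ _, ?_⟩
    rw [heJ, heJ]
    exact hj.2
  -- final set
  refine ⟨A.image e, ?_, ?_, ?_⟩
  · intro x hx
    obtain ⟨a, haA, rfl⟩ := Finset.mem_image.1 hx
    have haS : a ∈ S := hAS haA
    refine ⟨fun k => ?_, by push_cast [hsumabs a haS]; ring⟩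
    by_cases hk : k.val < m * b
    · rw [hedef]; simp only; rw [dif_pos hk]
      exact Tb_abs_le (Fintype.mem_piFinset.1 haS _) _
    · rw [hedef]; simp only; rw [dif_neg hk]; norm_num
  · rw [Finset.card_image_of_injective _ heinj]
    calc ((n : ℝ) / (2 * m)) ^ m ≤ (((b : ℝ) + 1) / 2) ^ m :=
          pow_le_pow_left₀ (by positivity) hfrac m
      _ ≤ (A.card : ℝ) := hchain
  · intro x hx y hy hxy
    obtain ⟨a, haA, rfl⟩ := Finset.mem_image.1 hx
    obtain ⟨c, hcA, rfl⟩ := Finset.mem_image.1 hy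
    have hac : a ≠ c := fun h => hxy (by rw [h])
    exact lt_of_lt_of_le (hsep a haA c hcA hac) (hdist a c)
end

section
/- Let m, n ∈ ℕ with m ≤ n/4. The number of elements of H_m = {x ∈ {-1,0,1}^n : ∑|x_i| = 2m} within Hamming distance m of a fixed x ∈ H_m is at most C(n,m)·3^m, and #H_m = C(n,2m)·2^{2m}. -/
/-!
A point `y` within Hamming distance `m` of `x` agrees with `x` outside some `m`-set of coordinates
containing all disagreements; there are `C(n, m)` such sets and at most `3 ^ m` vectors in
`{-1, 0, 1}ⁿ` agreeing with `x` off a given one. A vector of `H_m` is determined by its support,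
which has size `2m`, together with a sign on each coordinate of the support.
-/

/-- The set `H_m = {x ∈ {-1,0,1}^n : ∑ |x_i| = 2m}`. -/
def Hm (n m : ℕ) : Set (Fin n → ℤ) :=
  {x | (∀ i, |x i| ≤ 1) ∧ ∑ i, |x i| = 2 * m}

open Finset

section

variable {ι : Type*} [Fintype ι]

theorem sum_abs_eq_card_ne_zero {y : ι → ℤ} (hy : ∀ i, |y i| ≤ 1) :
    ∑ i, |y i| = #({i | y i ≠ 0} : Finset ι) := by
  rw [natCast_card_filter]
  refine sum_congr rfl fun i _ => ?_
  obtain h | h | h : y i = -1 ∨ y i = 0 ∨ y i = 1 := by have := abs_le.1 (hy i); omega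
  all_goals simp [h]

variable [DecidableEq ι] {α : Type*}

def agreeOutside (x : ι → α) (A : Finset α) (s : Finset ι) : Finset (ι → α) :=
  Fintype.piFinset fun i => if i ∈ s then A else {x i}

theorem card_agreeOutside (x : ι → α) (A : Finset α) (s : Finset ι) :
    #(agreeOutside x A s) = #A ^ #s := by
  rw [agreeOutside, Fintype.card_piFinset, ← prod_const, ← Fintype.prod_ite_mem s fun _ => #A]
  exact prod_congr rfl fun i _ => by split_ifs <;> simp

variable [DecidableEq α]

theorem filter_hammingDist_le_subset_biUnion (x : ι → α) (A : Finset α) {r : ℕ}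
    (hr : r ≤ Fintype.card ι) :
    {y ∈ Fintype.piFinset fun _ : ι => A | hammingDist x y ≤ r} ⊆
      (powersetCard r univ).biUnion (agreeOutside x A) := by
  intro y hy
  obtain ⟨hyA, hxy⟩ := mem_filter.1 hy
  rw [Fintype.mem_piFinset] at hyA
  obtain ⟨s, hdiff, -, hs⟩ := exists_subsuperset_card_eq (subset_univ {i | x i ≠ y i})
    hxy (by rwa [card_univ])
  refine mem_biUnion.2 ⟨s, mem_powersetCard.2 ⟨subset_univ s, hs⟩,
    Fintype.mem_piFinset.2 fun i => ?_⟩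
  by_cases hi : i ∈ s
  · simpa [hi] using hyA i
  · have : x i = y i := by_contra fun h => hi (hdiff (by simp [h]))
    simp [hi, this]

theorem card_filter_hammingDist_le (x : ι → α) (A : Finset α) {r : ℕ}
    (hr : r ≤ Fintype.card ι) :
    #{y ∈ Fintype.piFinset fun _ : ι => A | hammingDist x y ≤ r} ≤
      (Fintype.card ι).choose r * #A ^ r := by
  calc _ ≤ #((powersetCard r univ).biUnion (agreeOutside x A)) :=
        card_le_card (filter_hammingDist_le_subset_biUnion x A hr)
    _ ≤ ∑ s ∈ powersetCard r univ, #(agreeOutside x A s) := card_biUnion_le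
    _ = (Fintype.card ι).choose r * #A ^ r := by
        rw [Finset.sum_congr rfl fun s hs => by
          rw [card_agreeOutside, (mem_powersetCard.1 hs).2], sum_const,
          card_powersetCard, card_univ, smul_eq_mul]

def signVectors (s : Finset ι) : Finset (ι → ℤ) :=
  agreeOutside 0 {-1, 1} s

theorem mem_signVectors {s : Finset ι} {y : ι → ℤ} :
    y ∈ signVectors s ↔ (∀ i, |y i| ≤ 1) ∧ ({i | y i ≠ 0} : Finset ι) = s := by
  have key : ∀ i, (y i ∈ if i ∈ s then ({-1, 1} : Finset ℤ) else {0}) ↔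
      |y i| ≤ 1 ∧ (y i ≠ 0 ↔ i ∈ s) := fun i => by
    by_cases hi : i ∈ s <;> simp [hi, abs_le] <;> omega
  simp only [signVectors, agreeOutside, Pi.zero_apply, Fintype.mem_piFinset, key, forall_and,
    Finset.ext_iff, mem_filter, mem_univ, true_and]

theorem card_signVectors (s : Finset ι) : #(signVectors s) = 2 ^ #s :=
  card_agreeOutside 0 {-1, 1} s

end

theorem mem_Hm_iff {n m : ℕ} {y : Fin n → ℤ} :
    y ∈ Hm n m ↔ ∃ s ∈ powersetCard (2 * m) univ, y ∈ signVectors s := by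
  simp only [Hm, Set.mem_ofPred_eq, mem_powersetCard, mem_signVectors]
  constructor
  · rintro ⟨hy, hsum⟩
    refine ⟨({i | y i ≠ 0} : Finset (Fin n)), ⟨subset_univ _, ?_⟩, hy, rfl⟩
    rw [sum_abs_eq_card_ne_zero hy] at hsum
    exact_mod_cast hsum
  · rintro ⟨s, ⟨-, hs⟩, hy, rfl⟩
    refine ⟨hy, ?_⟩
    rw [sum_abs_eq_card_ne_zero hy, hs]
    push_cast; rfl

theorem Hm_eq_biUnion_signVectors (n m : ℕ) :
    Hm n m = ↑((powersetCard (2 * m) univ).biUnion signVectors : Finset (Fin n → ℤ)) := by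
  ext y
  simp [mem_Hm_iff]

theorem ncard_Hm (n m : ℕ) : (Hm n m).ncard = n.choose (2 * m) * 2 ^ (2 * m) := by
  rw [Hm_eq_biUnion_signVectors, Set.ncard_coe_finset, card_biUnion]
  · rw [Finset.sum_congr rfl fun s hs => by rw [card_signVectors, (mem_powersetCard.1 hs).2],
      sum_const, card_powersetCard, card_univ, Fintype.card_fin, smul_eq_mul]
  · intro s _ t _ hst
    refine disjoint_left.2 fun y hys hyt => hst ?_
    rw [← (mem_signVectors.1 hys).2, (mem_signVectors.1 hyt).2]

theorem Hm_subset_piFinset (n m : ℕ) :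
    Hm n m ⊆ ↑(Fintype.piFinset fun _ : Fin n => ({-1, 0, 1} : Finset ℤ)) := fun y hy => by
  simpa [abs_le, Fintype.mem_piFinset] using fun i => by have := abs_le.1 (hy.1 i); omega

theorem card_hamming_ball_and_card_Hm_general (m n : ℕ) (hmn : 4 * m ≤ n)
    (x : Fin n → ℤ) :
    ({y ∈ Hm n m | hammingDist x y ≤ m} : Set (Fin n → ℤ)).ncard ≤ n.choose m * 3 ^ m ∧
      (Hm n m).ncard = n.choose (2 * m) * 2 ^ (2 * m) := by
  refine ⟨?_, ncard_Hm n m⟩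
  set ball :=
    {y ∈ Fintype.piFinset fun _ : Fin n => ({-1, 0, 1} : Finset ℤ) | hammingDist x y ≤ m}
  have hsub : {y ∈ Hm n m | hammingDist x y ≤ m} ⊆ ↑ball :=
    fun y ⟨hy, hd⟩ => by simpa [ball, hd] using Hm_subset_piFinset n m hy
  calc _ ≤ #ball := Set.ncard_coe_finset ball ▸ Set.ncard_le_ncard hsub (finite_toSet _)
    _ ≤ n.choose m * 3 ^ m := by
        simpa using card_filter_hammingDist_le x {-1, 0, 1} (r := m) (by simp; omega)

theorem card_hamming_ball_and_card_Hm (m n : ℕ) (hm : 1 ≤ m) (hmn : 4 * m ≤ n)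
    (x : Fin n → ℤ) (hx : x ∈ Hm n m) :
    ({y ∈ Hm n m | hammingDist x y ≤ m} : Set (Fin n → ℤ)).ncard ≤ n.choose m * 3 ^ m ∧
      (Hm n m).ncard = n.choose (2 * m) * 2 ^ (2 * m) :=
  card_hamming_ball_and_card_Hm_general m n hmn x
end

section
/- For m ≤ n/4, the ratio (C(n,2m)·2^{2m}) / (C(n,m)·3^m) is at least (n/(2m))^m. -/
open Finset Nat

lemma keyZ (m n i : ℤ) (hm : 1 ≤ m) (hi : 0 ≤ i) (hi2 : i ≤ m - 1) (hn : 4 * m ≤ n) :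
    9 * n^2 * ((2*m - i) * (m + 1 + i)) ≤ 64 * m^2 * ((n - m - i) * (n - 2*m + 1 + i)) := by
  have h1 : 0 ≤ n - 4*m := by linarith
  have h2 : 0 ≤ m - 1 - i := by linarith
  have hm0 : 0 ≤ m := by linarith
  nlinarith [sq_nonneg (n - 4*m), sq_nonneg (m - 1 - 2*i), mul_nonneg h1 h2, mul_nonneg (mul_nonneg h1 h2) hi, mul_nonneg h1 hi, mul_nonneg (mul_nonneg h1 h1) (sq_nonneg (m-1-2*i)), mul_nonneg (sq_nonneg (n-4*m)) (sq_nonneg (m-1-2*i)), mul_nonneg (mul_nonneg h1 hm0) h2, mul_nonneg (mul_nonneg h2 hi) hm0, sq_nonneg (m-1), mul_nonneg (mul_nonneg h1 h1) hm0, mul_nonneg (mul_nonneg hm0 hi) h2]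

lemma main_nat (m n : ℕ) (hm : 1 ≤ m) (hmn : 4 * m ≤ n) :
    n.choose m * 3^m * n^m ≤ n.choose (2*m) * 4^m * (2*m)^m := by
  have h2mn : 2 * m ≤ n := by omega
  have hmn' : m ≤ n := by omega
  set E := (2*m).descFactorial m with hEdef
  set D := (n - m).descFactorial m with hDdef
  have hEpos : 0 < E :=
    Nat.pos_of_ne_zero (by rw [hEdef, Ne, Nat.descFactorial_eq_zero_iff_lt]; omega)
  have hfac1 : m ! * E = (2*m)! := by
    have := Nat.factorial_mul_descFactorial (show m ≤ 2*m by omega)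
    rwa [show 2*m - m = m by omega] at this
  have hfac2 : (n - 2*m)! * D = (n - m)! := by
    have := Nat.factorial_mul_descFactorial (show m ≤ n - m by omega)
    rwa [show n - m - m = n - 2*m by omega] at this
  have hA := Nat.choose_mul_factorial_mul_factorial h2mn
  have hB := Nat.choose_mul_factorial_mul_factorial hmn'
  have hid : n.choose (2*m) * E = n.choose m * D := by
    have h3 : (n.choose (2*m) * E) * (m ! * (n-2*m)!) = (n.choose m * D) * (m ! * (n-2*m)!) := by
      calc (n.choose (2*m) * E) * (m ! * (n-2*m)!)
          = n.choose (2*m) * (m ! * E) * (n-2*m)! := by ring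
        _ = n.choose (2*m) * (2*m)! * (n-2*m)! := by rw [hfac1]
        _ = n ! := hA
        _ = n.choose m * m ! * (n - m)! := hB.symm
        _ = n.choose m * m ! * ((n-2*m)! * D) := by rw [hfac2]
        _ = (n.choose m * D) * (m ! * (n-2*m)!) := by ring
    exact Nat.eq_of_mul_eq_mul_right (Nat.mul_pos (Nat.factorial_pos _) (Nat.factorial_pos _)) h3
  -- product expressions
  have hE : E = ∏ i ∈ range m, (2*m - i) := Nat.descFactorial_eq_prod_range _ _
  have hD : D = ∏ i ∈ range m, (n - m - i) := Nat.descFactorial_eq_prod_range _ _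
  have hE' : E = ∏ i ∈ range m, (m + 1 + i) := by
    have hr := Finset.prod_range_reflect (fun i => 2*m - i) m
    rw [hE, ← hr]
    exact Finset.prod_congr rfl (fun i hi => by
      have := Finset.mem_range.1 hi; omega)
  have hD' : D = ∏ i ∈ range m, (n - 2*m + 1 + i) := by
    have hr := Finset.prod_range_reflect (fun i => n - m - i) m
    rw [hD, ← hr]
    exact Finset.prod_congr rfl (fun i hi => by
      have := Finset.mem_range.1 hi; omega)
  -- pointwise inequality, product version
  have hprod : ∏ i ∈ range m, (9 * n^2 * ((2*m - i) * (m+1+i)))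
      ≤ ∏ i ∈ range m, (64 * m^2 * ((n - m - i) * (n - 2*m + 1 + i))) := by
    apply Finset.prod_le_prod'
    intro i hi
    have hi' : i < m := Finset.mem_range.1 hi
    have hz := keyZ (m:ℤ) (n:ℤ) (i:ℤ) (by exact_mod_cast hm) (by positivity)
      (by omega) (by exact_mod_cast hmn)
    have e1 : ((2*m - i : ℕ) : ℤ) = 2*(m:ℤ) - i := by omega
    have e2 : ((n - m - i : ℕ) : ℤ) = (n:ℤ) - m - i := by omega
    have e3 : ((n - 2*m + 1 + i : ℕ) : ℤ) = (n:ℤ) - 2*m + 1 + i := by omega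
    have hcast : ((9 * n^2 * ((2*m - i) * (m+1+i)) : ℕ) : ℤ)
        ≤ ((64 * m^2 * ((n - m - i) * (n - 2*m + 1 + i)) : ℕ) : ℤ) := by
      push_cast [e1, e2, e3]
      convert hz using 2 <;> ring
    exact_mod_cast hcast
  -- compute the two products
  have hPL : ∏ i ∈ range m, (9 * n^2 * ((2*m - i) * (m+1+i)))
      = 9^m * (n^2)^m * (E * E) := by
    simp only [Finset.prod_mul_distrib, Finset.prod_const, Finset.card_range]
    rw [← hE, ← hE']
  have hPR : ∏ i ∈ range m, (64 * m^2 * ((n - m - i) * (n - 2*m + 1 + i)))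
      = 64^m * (m^2)^m * (D * D) := by
    simp only [Finset.prod_mul_distrib, Finset.prod_const, Finset.card_range]
    rw [← hD, ← hD']
  have h64' : (64:ℕ)^m * (m^2)^m = (4^m*(2*m)^m)^2 := by
    calc (64:ℕ)^m * (m^2)^m = (64*m^2)^m := by rw [mul_pow]
      _ = ((4*(2*m))^2)^m := by rw [show 64*m^2 = (4*(2*m))^2 by ring]
      _ = ((4*(2*m))^m)^2 := pow_right_comm _ _ _
      _ = (4^m*(2*m)^m)^2 := by rw [mul_pow]
  have h9' : (9:ℕ)^m * (n^2)^m = (3^m*n^m)^2 := by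
    calc (9:ℕ)^m * (n^2)^m = (9*n^2)^m := by rw [mul_pow]
      _ = ((3*n)^2)^m := by rw [show 9*n^2 = (3*n)^2 by ring]
      _ = ((3*n)^m)^2 := pow_right_comm _ _ _
      _ = (3^m*n^m)^2 := by rw [mul_pow]
  have hL : (n.choose m * 3^m * n^m)^2 * E^2
      = (n.choose m)^2 * ∏ i ∈ range m, (9 * n^2 * ((2*m - i) * (m+1+i))) := by
    rw [hPL, h9']; ring
  have hR : (n.choose (2*m) * 4^m * (2*m)^m)^2 * E^2
      = (n.choose m)^2 * ∏ i ∈ range m, (64 * m^2 * ((n - m - i) * (n - 2*m + 1 + i))) := by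
    rw [hPR, h64']
    calc (n.choose (2*m) * 4^m * (2*m)^m)^2 * E^2
        = (n.choose (2*m) * E)^2 * (4^m*(2*m)^m)^2 := by ring
      _ = (n.choose m * D)^2 * (4^m*(2*m)^m)^2 := by rw [hid]
      _ = (n.choose m)^2 * ((4^m*(2*m)^m)^2 * (D * D)) := by ring
  have hsq : (n.choose m * 3^m * n^m)^2 * E^2 ≤ (n.choose (2*m) * 4^m * (2*m)^m)^2 * E^2 := by
    rw [hL, hR]
    exact Nat.mul_le_mul_left _ hprod
  have hsq' : (n.choose m * 3^m * n^m)^2 ≤ (n.choose (2*m) * 4^m * (2*m)^m)^2 :=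
    Nat.le_of_mul_le_mul_right hsq (by positivity)
  exact (Nat.pow_le_pow_iff_left (two_ne_zero)).1 hsq'

theorem choose_ratio_lower (m n : ℕ) (hm : 1 ≤ m) (hmn : 4 * m ≤ n) :
    ((n : ℝ) / (2 * m)) ^ m ≤
      ((n.choose (2 * m) : ℝ) * 2 ^ (2 * m)) / ((n.choose m : ℝ) * 3 ^ m) := by
  have hm' : (0:ℝ) < m := by exact_mod_cast hm
  have hc : (0:ℝ) < (n.choose m : ℝ) := by
    exact_mod_cast Nat.choose_pos (by omega : m ≤ n)
  rw [div_pow, div_le_div_iff₀ (by positivity) (by positivity)]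
  have main := main_nat m n hm hmn
  have mainR : ((n.choose m : ℝ) * 3^m * (n:ℝ)^m) ≤ (n.choose (2*m) : ℝ) * 4^m * (2*(m:ℝ))^m := by
    have : ((n.choose m * 3^m * n^m : ℕ) : ℝ) ≤ ((n.choose (2*m) * 4^m * (2*m)^m : ℕ) : ℝ) := by
      exact_mod_cast main
    push_cast at this
    convert this using 2
  have h4 : (2:ℝ)^(2*m) = 4^m := by
    rw [pow_mul]; norm_num
  calc (n:ℝ)^m * ((n.choose m : ℝ) * 3^m)
      = (n.choose m : ℝ) * 3^m * (n:ℝ)^m := by ring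
    _ ≤ (n.choose (2*m) : ℝ) * 4^m * (2*(m:ℝ))^m := mainR
    _ = (n.choose (2*m) : ℝ) * 2^(2*m) * (2*(m:ℝ))^m := by rw [h4]
end

section
/- Let 0 < p < ∞ and 1 ≤ m ≤ n. Every x ∈ B_p^n can be approximated by a vector x̃ with at most m nonzero components such that ‖x - x̃‖_∞ ≤ m^{-1/p}. -/
theorem best_m_term_approx (p : ℝ) (hp : 0 < p) (m n : ℕ) (hm : 1 ≤ m) (hmn : m ≤ n)
    (x : Fin n → ℝ) (hx : ∑ i, |x i| ^ p ≤ 1) :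
    ∃ y : Fin n → ℝ, ({i : Fin n | y i ≠ 0}).ncard ≤ m ∧
      ⨆ i, |x i - y i| ≤ (m : ℝ) ^ (-(1 / p)) := by
  have hm0 : (0 : ℝ) < m := by exact_mod_cast hm
  set t : ℝ := (m : ℝ) ^ (-(1 / p)) with ht
  have ht0 : 0 < t := Real.rpow_pos_of_pos hm0 _
  have htp : t ^ p = (m : ℝ)⁻¹ := by
    rw [ht, ← Real.rpow_mul hm0.le]
    have h1 : -(1 / p) * p = -1 := by field_simp
    rw [h1, Real.rpow_neg_one]
  refine ⟨fun i => if t < |x i| then x i else 0, ?_, ?_⟩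
  · set F : Finset (Fin n) := Finset.univ.filter (fun i => t < |x i|) with hF
    have hsub : {i : Fin n | (if t < |x i| then x i else 0) ≠ 0} ⊆ ↑F := by
      intro i hi
      simp only [Set.mem_setOf_eq] at hi
      simp only [hF, Finset.coe_filter, Set.mem_setOf_eq, Finset.mem_univ, true_and]
      by_contra h
      simp [h] at hi
    have hcard : (F.card : ℝ) * (m : ℝ)⁻¹ ≤ 1 := by
      calc (F.card : ℝ) * (m : ℝ)⁻¹ = ∑ _i ∈ F, (m : ℝ)⁻¹ := by
            rw [Finset.sum_const, nsmul_eq_mul]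
        _ ≤ ∑ i ∈ F, |x i| ^ p := by
            refine Finset.sum_le_sum fun i hi => ?_
            have hti : t < |x i| := (Finset.mem_filter.mp hi).2
            have := Real.rpow_le_rpow ht0.le hti.le hp.le
            rwa [htp] at this
        _ ≤ ∑ i, |x i| ^ p := by
            refine Finset.sum_le_sum_of_subset_of_nonneg (Finset.subset_univ _)
              fun i _ _ => Real.rpow_nonneg (abs_nonneg _) _
        _ ≤ 1 := hx
    have hFm : F.card ≤ m := by
      have : (F.card : ℝ) ≤ m := by
        have := mul_le_mul_of_nonneg_right hcard hm0.le
        rwa [mul_assoc, inv_mul_cancel₀ hm0.ne', mul_one, one_mul] at this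
      exact_mod_cast this
    calc ({i : Fin n | (if t < |x i| then x i else 0) ≠ 0}).ncard
        ≤ (↑F : Set (Fin n)).ncard :=
          Set.ncard_le_ncard hsub (Set.toFinite _)
      _ = F.card := Set.ncard_coe_finset F
      _ ≤ m := hFm
  · have hn : 0 < n := lt_of_lt_of_le hm hmn
    have : Nonempty (Fin n) := ⟨⟨0, hn⟩⟩
    refine ciSup_le fun i => ?_
    by_cases h : t < |x i|
    · simp [h, ht0.le]
    · simpa [h] using le_of_not_gt h
end
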